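/- arXiv:2312.08798 — 6 statements merged into one kernel-verified Lean document; each statement's English description precedes it below -/
import Mathlib

section
/- Every ABC scoring rule satisfies group participation: for every approval profile A, every committee size k, and every group of voters I ⊊ N_A, it is not the case that f(A_{-I},k) ≿_i f(A,k) for all i ∈ I and f(A_{-I},k) ≻_i f(A,k) for some i ∈ I. -/
/-!
If a group `I` strictly profits from abstaining, pick `W ∈ f(A - I)` and `W' ∈ f(A)` witnessing the
strict gain. Weak gains for all of `I` give `ŝ(I, W') ≤ ŝ(I, W)`; since `ŝ` is additive in the
profile, the optimality of `W` for `A - I` and of `W'` for `A` then force `W' ∈ f(A - I)` and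
`W ∈ f(A)`. The weak preference of the strictly profiting voter, applied to this swapped pair,
contradicts the strict gain.
-/

/-- An approval profile is a multiset of approval ballots (anonymous encoding):
each ballot is a nonempty subset of the candidate set `C`, and the electorate
is nonempty. -/
def validProfile {C : Type*} [DecidableEq C] (A : Multiset (Finset C)) : Prop :=
  A ≠ 0 ∧ ∀ b ∈ A, b ≠ (∅ : Finset C)

/-- Kelly's extension, weak preference of a voter with ballot `b` for a set of
committees `X` over a set of committees `Y`. -/
def KellyWeak {C : Type*} [DecidableEq C] (b : Finset C) (X Y : Set (Finset C)) : Prop :=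
  ∀ W ∈ X, ∀ W' ∈ Y, (W' ∩ b).card ≤ (W ∩ b).card

/-- Kelly's extension, strict preference. -/
def KellyStrict {C : Type*} [DecidableEq C] (b : Finset C) (X Y : Set (Finset C)) : Prop :=
  KellyWeak b X Y ∧ ∃ W ∈ X, ∃ W' ∈ Y, (W' ∩ b).card < (W ∩ b).card

/-- The total score `ŝ(A,W)` of a committee `W` under the scoring function `s`. -/
def abcScore {C : Type*} [DecidableEq C] (s : ℕ → ℕ → ℚ) (A : Multiset (Finset C))
    (W : Finset C) : ℚ :=
  (A.map fun b => s (b ∩ W).card b.card).sum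

/-- The ABC scoring rule induced by `s`: all size-`k` committees with maximal score. -/
def abcRule {C : Type*} [DecidableEq C] (s : ℕ → ℕ → ℚ)
    (A : Multiset (Finset C)) (k : ℕ) : Set (Finset C) :=
  {W | W.card = k ∧ ∀ W' : Finset C, W'.card = k → abcScore s A W' ≤ abcScore s A W}

open Finset

section ABCScoring

variable {C : Type*} [DecidableEq C] {s : ℕ → ℕ → ℚ}

theorem abcScore_add (A B : Multiset (Finset C)) (W : Finset C) :
    abcScore s (A + B) W = abcScore s A W + abcScore s B W := by
  simp only [abcScore, Multiset.map_add, Multiset.sum_add]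

theorem abcScore_le_of_forall_card_inter_le
    (hmono : ∀ x x' y : ℕ, x ≤ x' → x' ≤ y → s x y ≤ s x' y)
    {I : Multiset (Finset C)} {V V' : Finset C}
    (h : ∀ b ∈ I, (V' ∩ b).card ≤ (V ∩ b).card) :
    abcScore s I V' ≤ abcScore s I V := by
  refine Multiset.sum_map_le_sum_map _ _ fun b hb =>
    hmono _ _ _ ?_ (card_le_card inter_subset_left)
  rw [inter_comm b V', inter_comm b V]
  exact h b hb

theorem abcRule_exchange {B I : Multiset (Finset C)} {k : ℕ} {W W' : Finset C}
    (hW : W ∈ abcRule s B k) (hW' : W' ∈ abcRule s (B + I) k)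
    (hI : abcScore s I W' ≤ abcScore s I W) :
    W' ∈ abcRule s B k ∧ W ∈ abcRule s (B + I) k := by
  have hBW : abcScore s B W' ≤ abcScore s B W := hW.2 W' hW'.1
  have hBIW : abcScore s (B + I) W ≤ abcScore s (B + I) W' := hW'.2 W hW.1
  rw [abcScore_add, abcScore_add] at hBIW
  refine ⟨⟨hW'.1, fun V hV => (hW.2 V hV).trans (by linarith)⟩,
    ⟨hW.1, fun V hV => (hW'.2 V hV).trans ?_⟩⟩
  rw [abcScore_add, abcScore_add]
  linarith

end ABCScoring

theorem abcScoring_group_participation_general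
    {C : Type*} [DecidableEq C]
    (s : ℕ → ℕ → ℚ)
    (hmono : ∀ x x' y : ℕ, x ≤ x' → x' ≤ y → s x y ≤ s x' y)
    (A : Multiset (Finset C))
    (k : ℕ)
    (I : Multiset (Finset C)) (hIle : I ≤ A) :
    ¬ ((∀ b ∈ I, KellyWeak b (abcRule s (A - I) k) (abcRule s A k)) ∧
       ∃ b ∈ I, KellyStrict b (abcRule s (A - I) k) (abcRule s A k)) := by
  obtain ⟨B, rfl⟩ : ∃ B, A = B + I := ⟨A - I, (tsub_add_cancel_of_le hIle).symm⟩
  rw [add_tsub_cancel_right]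
  rintro ⟨hweak, b₀, hb₀, -, W, hW, W', hW', hlt⟩
  have hI : abcScore s I W' ≤ abcScore s I W :=
    abcScore_le_of_forall_card_inter_le hmono fun b hb => hweak b hb W hW W' hW'
  obtain ⟨hW'B, hWBI⟩ := abcRule_exchange hW hW' hI
  exact (hweak b₀ hb₀ W' hW'B W hWBI).not_gt hlt

/-- Every ABC scoring rule satisfies group participation: no group of voters
`I ⊊ N_A` can benefit from abstaining. -/
theorem abcScoring_group_participation
    {C : Type*} [DecidableEq C] [Fintype C] (hm : 1 < Fintype.card C)
    (s : ℕ → ℕ → ℚ)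
    (hzero : ∀ y : ℕ, s 0 y = 0)
    (hmono : ∀ x x' y : ℕ, x ≤ x' → x' ≤ y → s x y ≤ s x' y)
    (A : Multiset (Finset C)) (hA : validProfile A)
    (k : ℕ) (hk1 : 1 ≤ k) (hk2 : k < Fintype.card C)
    (I : Multiset (Finset C)) (hIle : I ≤ A) (hIne : I ≠ A) :
    ¬ ((∀ b ∈ I, KellyWeak b (abcRule s (A - I) k) (abcRule s A k)) ∧
       ∃ b ∈ I, KellyStrict b (abcRule s (A - I) k) (abcRule s A k)) :=
  abcScoring_group_participation_general s hmono A k I hIle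
end

section
/- Sequential Chamberlin–Courant approval voting (seqCCAV) fails participation: there exist a candidate set C, a committee size k, an approval profile A, and a voter i ∈ N_A such that f(A_{-i},k) ≻_i f(A,k). -/
/-- The Thiele score `ŝ(A,W) = Σ_{i ∈ N_A} s(|A_i ∩ W|)` of a committee `W`. -/
def thieleScore {C : Type*} [DecidableEq C] (s : ℕ → ℚ) (A : Multiset (Finset C))
    (W : Finset C) : ℚ :=
  (A.map fun b => s (b ∩ W).card).sum

/-- `seqThieleValid s A P L`: the sequence `L` is a valid continuation of the partial
committee `P` for the sequential Thiele rule induced by `s`: each entry maximizes the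
Thiele score of the extended partial committee. -/
def seqThieleValid {C : Type*} [DecidableEq C] (s : ℕ → ℚ) (A : Multiset (Finset C)) :
    Finset C → List C → Prop
  | _, [] => True
  | P, c :: rest =>
      c ∉ P ∧
      (∀ x : C, x ∉ P → thieleScore s A (insert x P) ≤ thieleScore s A (insert c P)) ∧
      seqThieleValid s A (insert c P) rest

/-- The sequential Thiele rule induced by the scoring function `s`. -/
def seqThiele {C : Type*} [DecidableEq C] (s : ℕ → ℚ) (A : Multiset (Finset C))
    (k : ℕ) : Set (Finset C) :=
  {W | ∃ L : List C, L.toFinset = W ∧ L.length = k ∧ seqThieleValid s A ∅ L}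

/-- The CCAV scoring function: `s(x) = 1` for all `x ≥ 1` and `s(0) = 0`. -/
def ccavScore : ℕ → ℚ := fun x => if x = 0 then 0 else 1

/-! The counterexample uses candidates `0, 1, 2, 3`, committee size `3`, and the voter
`{0, 1}`. With this voter present the singletons `0, 1, 2` all cover three ballots, so the
greedy rule may open with `0` and then take `3` (tied with `1` and `2`), ending with
`{0, 2, 3}`. Without the voter, `2` is the unique best opener, then `1`, then `0`, so the
only outcome is `{0, 1, 2}`, which contains the whole ballot `{0, 1}`. -/

section Greedy

variable {C α : Type*} [DecidableEq C] [Preorder α]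

def IsGreedyExtension (g : Finset C → α) : Finset C → List C → Prop
  | _, [] => True
  | P, c :: L =>
      c ∉ P ∧ (∀ x, x ∉ P → g (insert x P) ≤ g (insert c P)) ∧ IsGreedyExtension g (insert c P) L

instance IsGreedyExtension.decidable [Fintype C] [DecidableLE α] (g : Finset C → α) :
    ∀ P L, Decidable (IsGreedyExtension g P L)
  | _, [] => .isTrue trivial
  | P, c :: L =>
    haveI := IsGreedyExtension.decidable g (insert c P) L
    decidable_of_iff (c ∉ P ∧ (∀ x, x ∉ P → g (insert x P) ≤ g (insert c P)) ∧
      IsGreedyExtension g (insert c P) L) Iff.rfl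

theorem isGreedyExtension_comp_orderEmbedding_iff {β : Type*} [Preorder β] (f : α ↪o β)
    (g : Finset C → α) : ∀ P L, IsGreedyExtension (f ∘ g) P L ↔ IsGreedyExtension g P L
  | _, [] => Iff.rfl
  | P, c :: L => by
    simp only [IsGreedyExtension, Function.comp_apply, f.le_iff_le,
      isGreedyExtension_comp_orderEmbedding_iff f g _ L]

theorem seqThieleValid_iff_isGreedyExtension (s : ℕ → ℚ) (A : Multiset (Finset C)) :
    ∀ P L, seqThieleValid s A P L ↔ IsGreedyExtension (thieleScore s A) P L
  | _, [] => Iff.rfl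
  | P, c :: L => by
    simp only [seqThieleValid, IsGreedyExtension, seqThieleValid_iff_isGreedyExtension s A _ L]

end Greedy

section Coverage

variable {C : Type*} [DecidableEq C]

def coverage (A : Multiset (Finset C)) (W : Finset C) : ℕ :=
  (A.filter fun b => (b ∩ W).Nonempty).card

theorem thieleScore_ccavScore (A : Multiset (Finset C)) (W : Finset C) :
    thieleScore ccavScore A W = coverage A W := by
  induction A using Multiset.induction_on with
  | empty => simp [thieleScore, coverage]
  | cons b A ih =>
    simp only [thieleScore, coverage] at ih ⊢
    rw [Multiset.map_cons, Multiset.sum_cons, ih, Multiset.filter_cons]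
    by_cases h : (b ∩ W).Nonempty
    · simp [ccavScore, h, h.ne_empty, add_comm]
    · simp [ccavScore, Finset.not_nonempty_iff_eq_empty.mp h]

theorem seqThieleValid_ccavScore_iff (A : Multiset (Finset C)) (P : Finset C) (L : List C) :
    seqThieleValid ccavScore A P L ↔ IsGreedyExtension (coverage A) P L := by
  have hscore : thieleScore ccavScore A = Nat.castOrderEmbedding ∘ coverage A :=
    funext (thieleScore_ccavScore A)
  rw [seqThieleValid_iff_isGreedyExtension, hscore, isGreedyExtension_comp_orderEmbedding_iff]

end Coverage

theorem kellyStrict_singleton_of_subset {C : Type*} [DecidableEq C] {b W W' : Finset C}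
    {Y : Set (Finset C)} (hbW : b ⊆ W) (hW' : W' ∈ Y) (hlt : (W' ∩ b).card < b.card) :
    KellyStrict b {W} Y := by
  have hWb : W ∩ b = b := Finset.inter_eq_right.mpr hbW
  refine ⟨?_, W, rfl, W', hW', by rwa [hWb]⟩
  rintro _ rfl V -
  rw [hWb]
  exact Finset.card_le_card Finset.inter_subset_right

def participationProfile : Multiset (Finset (Fin 4)) :=
  {{0}, {1}, {2}, {0, 1}, {0, 2}, {1, 3}, {2, 3}}

theorem seqThiele_erase_participationProfile :
    seqThiele ccavScore (participationProfile.erase {0, 1}) 3 = {{0, 1, 2}} := by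
  have greedy_unique : ∀ c₁ c₂ c₃ : Fin 4,
      IsGreedyExtension (coverage (participationProfile.erase {0, 1})) ∅ [c₁, c₂, c₃] →
        [c₁, c₂, c₃].toFinset = {0, 1, 2} := by
    decide
  ext W
  constructor
  · rintro ⟨L, rfl, hlen, hL⟩
    rw [seqThieleValid_ccavScore_iff] at hL
    match L, hlen with
    | [c₁, c₂, c₃], _ => exact greedy_unique c₁ c₂ c₃ hL
  · rintro rfl
    exact ⟨[2, 1, 0], by decide, rfl, (seqThieleValid_ccavScore_iff _ _ _).mpr (by decide)⟩

theorem mem_seqThiele_participationProfile :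
    {0, 2, 3} ∈ seqThiele ccavScore participationProfile 3 :=
  ⟨[0, 3, 2], by decide, rfl, (seqThieleValid_ccavScore_iff _ _ _).mpr (by decide)⟩

/-- seqCCAV fails participation: there are a candidate set, a committee size, a
profile, and a voter who strictly benefits from abstaining (w.r.t. Kelly's
extension). -/
theorem seqCCAV_fails_participation :
    ∃ (m k : ℕ) (A : Multiset (Finset (Fin m))) (b : Finset (Fin m)),
      1 ≤ k ∧ k < m ∧ validProfile A ∧ b ∈ A ∧
      KellyStrict b (seqThiele ccavScore (A.erase b) k) (seqThiele ccavScore A k) := by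
  refine ⟨4, 3, participationProfile, {0, 1}, by norm_num, by norm_num,
    ⟨by decide, by decide⟩, by decide, ?_⟩
  rw [seqThiele_erase_participationProfile]
  exact kellyStrict_singleton_of_subset (by decide) mem_seqThiele_participationProfile (by decide)
end

section
/- Every sequential Thiele rule other than approval voting fails participation: if s is a Thiele scoring function for which there exists x ≥ 1 with s(x+1) - s(x) < s(x) - s(x-1), then for the sequential Thiele rule f induced by s there exist a candidate set C, a committee size k, an approval profile A, and a voter i ∈ N_A with f(A_{-i},k) ≻_i f(A,k). -/
/-!
Let `x ≥ 1` be a point where `s` is strictly concave, so that the marginal gains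
`p = s x - s (x - 1)` and `q = s (x + 1) - s x` satisfy `0 ≤ q < p`. Add `x - 1` candidates
approved by every voter: as all marginal gains up to `p` are positive, they are elected first, after
which the rule behaves like the sequential rule for the shifted scoring function
`t j = s (x - 1 + j)`, with `t 1 - t 0 = p` and `t 2 - t 1 = q`. On four candidates
`0, 1, 2, 3`, take voter `i` with ballot `{0, 2}` and the profile `gadgetProfile c` for the others.
Without `i`, the rule strictly prefers `1`, then `2` (as `q < p`), then `0`, so it elects both of
`i`'s candidates. With `i`, the first round is a tie that `0` may win; then `1` wins and, once
`c (p - q) ≥ 2 q`, candidate `3` is at least as good as `2`, so some outcome contains only one of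
`i`'s candidates.
-/

open Finset

namespace SeqThiele

variable {C : Type*} [DecidableEq C]

theorem thieleScore_cons (t : ℕ → ℚ) (b : Finset C) (A : Multiset (Finset C)) (S : Finset C) :
    thieleScore t (b ::ₘ A) S = t (b ∩ S).card + thieleScore t A S := by
  simp only [thieleScore, Multiset.map_cons, Multiset.sum_cons]

def IsGreedyChoice (s : ℕ → ℚ) (A : Multiset (Finset C)) (P : Finset C) (c : C) : Prop :=
  c ∉ P ∧ ∀ x, x ∉ P → thieleScore s A (insert x P) ≤ thieleScore s A (insert c P)

theorem seqThieleValid_cons {s : ℕ → ℚ} {A : Multiset (Finset C)} {P : Finset C} {c : C}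
    {L : List C} :
    seqThieleValid s A P (c :: L) ↔
      IsGreedyChoice s A P c ∧ seqThieleValid s A (insert c P) L := by
  simp only [seqThieleValid, IsGreedyChoice, and_assoc]

theorem seqThieleValid_append {s : ℕ → ℚ} {A : Multiset (Finset C)} (l L : List C) :
    ∀ P : Finset C, seqThieleValid s A P (l ++ L) ↔
      seqThieleValid s A P l ∧ seqThieleValid s A (P ∪ l.toFinset) L := by
  induction l with
  | nil => simp [seqThieleValid]
  | cons c l ih =>
    intro P
    rw [List.cons_append, seqThieleValid_cons, seqThieleValid_cons, ih, List.toFinset_cons,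
      union_insert, insert_union, and_assoc]

theorem IsGreedyChoice.eq_of_forall_lt {s : ℕ → ℚ} {A : Multiset (Finset C)} {P : Finset C}
    {c w : C} (hc : IsGreedyChoice s A P c) (hw : w ∉ P)
    (hlt : ∀ x, x ∉ P → x ≠ w → thieleScore s A (insert x P) < thieleScore s A (insert w P)) :
    c = w := by
  by_contra hcw
  exact (hlt c hc.1 hcw).not_ge (hc.2 w hw)

theorem isGreedyChoice_of_forall_lt {s : ℕ → ℚ} {A : Multiset (Finset C)} {P : Finset C}
    {w : C} (hw : w ∉ P)
    (hlt : ∀ x, x ∉ P → x ≠ w → thieleScore s A (insert x P) < thieleScore s A (insert w P)) :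
    IsGreedyChoice s A P w :=
  ⟨hw, fun x hx => (eq_or_ne x w).elim (fun h => h ▸ le_rfl) fun h => (hlt x hx h).le⟩

section Common

variable {s : ℕ → ℚ} {A : Multiset (Finset C)} {U P : Finset C}

theorem card_inter_insert_le_of_subset {B : Finset C} {x u : C} (hu : u ∉ P)
    (hB : insert u P ⊆ B) : (B ∩ insert x P).card ≤ (B ∩ insert u P).card := by
  rw [inter_eq_right.mpr hB, card_insert_of_notMem hu]
  exact (card_le_card inter_subset_right).trans (card_insert_le x P)

theorem isGreedyChoice_of_mem_common (hs : Monotone s) (hU : ∀ B ∈ A, U ⊆ B) (hP : P ⊆ U)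
    {u : C} (hu : u ∈ U) (huP : u ∉ P) : IsGreedyChoice s A P u :=
  ⟨huP, fun _ _ => Multiset.sum_map_le_sum_map _ _ fun B hB =>
    hs (card_inter_insert_le_of_subset huP ((insert_subset hu hP).trans (hU B hB)))⟩

theorem IsGreedyChoice.mem_common (hs : Monotone s) (hU : ∀ B ∈ A, U ⊆ B)
    (hmiss : ∀ z, z ∉ U → ∃ B ∈ A, z ∉ B) (hP : P ⊆ U) (hPU : P ≠ U)
    (hstep : s P.card < s (P.card + 1)) {c : C} (hc : IsGreedyChoice s A P c) : c ∈ U := by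
  by_contra hcU
  obtain ⟨u, huU, huP⟩ := not_subset.mp fun h => hPU (hP.antisymm h)
  obtain ⟨B₀, hB₀, hcB₀⟩ := hmiss c hcU
  have hsub : ∀ B ∈ A, insert u P ⊆ B := fun B hB => (insert_subset huU hP).trans (hU B hB)
  refine (hc.2 u huP).not_gt (Multiset.sum_lt_sum ?_ ⟨B₀, hB₀, ?_⟩)
  · exact fun B hB => hs (card_inter_insert_le_of_subset huP (hsub B hB))
  · rwa [inter_insert_of_notMem hcB₀, inter_eq_right.mpr ((subset_insert u P).trans
      (hsub B₀ hB₀)), inter_eq_right.mpr (hsub B₀ hB₀), card_insert_of_notMem huP]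

theorem seqThieleValid_of_forall_mem_common (hs : Monotone s) (hU : ∀ B ∈ A, U ⊆ B)
    (l : List C) (hl : l.Nodup) (hlU : ∀ u ∈ l, u ∈ U) :
    ∀ P, P ⊆ U → (∀ u ∈ l, u ∉ P) → seqThieleValid s A P l := by
  induction l with
  | nil => exact fun _ _ _ => trivial
  | cons u l ih =>
    intro P hP hlP
    obtain ⟨hul, hl⟩ := List.nodup_cons.mp hl
    have huU := hlU u List.mem_cons_self
    refine seqThieleValid_cons.mpr ⟨isGreedyChoice_of_mem_common hs hU hP huU
      (hlP u List.mem_cons_self), ih hl (fun v hv => hlU v (List.mem_cons_of_mem u hv))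
      _ (insert_subset huU hP) fun v hv => ?_⟩
    rw [mem_insert, not_or]
    exact ⟨fun h => hul (h ▸ hv), hlP v (List.mem_cons_of_mem u hv)⟩

theorem exists_append_of_seqThieleValid (hs : Monotone s) (hU : ∀ B ∈ A, U ⊆ B)
    (hmiss : ∀ z, z ∉ U → ∃ B ∈ A, z ∉ B) (hstrict : ∀ j < U.card, s j < s (j + 1)) :
    ∀ (L : List C) (P : Finset C), P ⊆ U → seqThieleValid s A P L →
      U.card ≤ P.card + L.length →
      ∃ l L', L = l ++ L' ∧ P ∪ l.toFinset = U ∧ P.card + l.length = U.card := by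
  intro L
  induction L with
  | nil =>
    intro P hP _ hlen
    exact ⟨[], [], rfl, by simpa using eq_of_subset_of_card_le hP (by simpa using hlen),
      by simpa using le_antisymm (card_le_card hP) (by simpa using hlen)⟩
  | cons c L ih =>
    intro P hP hL hlen
    by_cases hPU : P = U
    · exact ⟨[], c :: L, rfl, by simpa using hPU, by simp [hPU]⟩
    obtain ⟨hc, hL⟩ := seqThieleValid_cons.mp hL
    have hcard : P.card < U.card := card_lt_card (ssubset_of_subset_of_ne hP hPU)
    have hcU := hc.mem_common hs hU hmiss hP hPU (hstrict _ hcard)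
    obtain ⟨l, L', rfl, hcover, hlen'⟩ := ih (insert c P) (insert_subset hcU hP) hL
      (by rw [card_insert_of_notMem hc.1]; simp only [List.length_cons] at hlen; omega)
    refine ⟨c :: l, L', rfl, by rwa [List.toFinset_cons, union_insert, ← insert_union], ?_⟩
    rw [card_insert_of_notMem hc.1] at hlen'
    simp only [List.length_cons]; omega

end Common

section Fillers

variable {y n : ℕ}

def addFillers (y : ℕ) (T : Finset (Fin n)) : Finset (Fin (y + n)) :=
  univ.map (Fin.castAddEmb n) ∪ T.map (Fin.natAddEmb y)

theorem castAdd_mem_addFillers (i : Fin y) (T : Finset (Fin n)) :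
    Fin.castAdd n i ∈ addFillers y T :=
  mem_union_left _ (mem_map_of_mem _ (mem_univ i))

@[simp]
theorem natAdd_mem_addFillers {j : Fin n} {T : Finset (Fin n)} :
    Fin.natAdd y j ∈ addFillers y T ↔ j ∈ T := by
  simp only [addFillers, mem_union, mem_map, mem_univ, true_and, Fin.castAddEmb_apply,
    Fin.natAddEmb_apply, Fin.ext_iff, Fin.val_castAdd, Fin.val_natAdd]
  refine ⟨?_, fun h => Or.inr ⟨j, h, rfl⟩⟩
  rintro (⟨i, hi⟩ | ⟨j', hj', hj⟩)
  · omega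
  · rwa [← Fin.ext (by omega : (j' : ℕ) = j)]

theorem addFillers_subset_addFillers {T S : Finset (Fin n)} (h : T ⊆ S) :
    addFillers y T ⊆ addFillers y S :=
  union_subset_union subset_rfl (map_subset_map.mpr h)

theorem insert_natAdd_addFillers (j : Fin n) (T : Finset (Fin n)) :
    insert (Fin.natAdd y j) (addFillers y T) = addFillers y (insert j T) := by
  simp only [addFillers, map_insert, union_insert, Fin.natAddEmb_apply]

theorem addFillers_inter (T S : Finset (Fin n)) :
    addFillers y T ∩ addFillers y S = addFillers y (T ∩ S) := by
  rw [addFillers, addFillers, addFillers, map_inter, union_inter_distrib_left]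

theorem card_addFillers (T : Finset (Fin n)) : (addFillers y T).card = y + T.card := by
  rw [addFillers, card_union_of_disjoint, card_map, card_map, card_univ, Fintype.card_fin]
  simp only [disjoint_left, mem_map, mem_univ, true_and, Fin.castAddEmb_apply,
    Fin.natAddEmb_apply, not_exists, not_and]
  rintro _ ⟨i, rfl⟩ j _ h
  simp only [Fin.ext_iff, Fin.val_castAdd, Fin.val_natAdd] at h
  omega

theorem exists_natAdd_of_notMem_addFillers {T : Finset (Fin n)} {x : Fin (y + n)}
    (hx : x ∉ addFillers y T) : ∃ j ∉ T, Fin.natAdd y j = x := by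
  induction x using Fin.addCases with
  | left i => exact absurd (castAdd_mem_addFillers i T) hx
  | right j => exact ⟨j, natAdd_mem_addFillers.not.mp hx, rfl⟩

theorem addFillers_empty_union_toFinset_map (L : List (Fin n)) :
    addFillers y ∅ ∪ (L.map (Fin.natAdd y)).toFinset = addFillers y L.toFinset := by
  ext x
  simp [addFillers, Fin.natAddEmb_apply]

theorem toFinset_map_castAdd_finRange :
    ((List.finRange y).map (Fin.castAdd n)).toFinset = addFillers y ∅ := by
  ext x
  simp [addFillers, Fin.castAddEmb_apply]

theorem validProfile_map_addFillers {A : Multiset (Finset (Fin n))}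
    (hA : validProfile A) : validProfile (A.map (addFillers y)) := by
  refine ⟨by simpa using hA.1, ?_⟩
  simp only [Multiset.mem_map]
  rintro _ ⟨T, hT, rfl⟩
  obtain ⟨j, hj⟩ := nonempty_iff_ne_empty.mpr (hA.2 T hT)
  exact ne_empty_of_mem (natAdd_mem_addFillers.mpr hj)

variable {s : ℕ → ℚ} {A : Multiset (Finset (Fin n))}

theorem thieleScore_map_addFillers (S : Finset (Fin n)) :
    thieleScore s (A.map (addFillers y)) (addFillers y S) =
      thieleScore (fun j => s (y + j)) A S := by
  simp only [thieleScore, Multiset.map_map, Function.comp_def, addFillers_inter, card_addFillers]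

theorem isGreedyChoice_addFillers_iff {S : Finset (Fin n)} {j : Fin n} :
    IsGreedyChoice s (A.map (addFillers y)) (addFillers y S) (Fin.natAdd y j) ↔
      IsGreedyChoice (fun j => s (y + j)) A S j := by
  simp only [IsGreedyChoice, natAdd_mem_addFillers, insert_natAdd_addFillers,
    thieleScore_map_addFillers]
  refine and_congr_right fun _ => ⟨fun h x hx => ?_, fun h x hx => ?_⟩
  · simpa only [insert_natAdd_addFillers, thieleScore_map_addFillers] using
      h (Fin.natAdd y x) (natAdd_mem_addFillers.not.mpr hx)
  · obtain ⟨x', hx', rfl⟩ := exists_natAdd_of_notMem_addFillers hx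
    simpa only [insert_natAdd_addFillers, thieleScore_map_addFillers] using h x' hx'

theorem seqThieleValid_map_addFillers_iff (L : List (Fin (y + n))) :
    ∀ S : Finset (Fin n), seqThieleValid s (A.map (addFillers y)) (addFillers y S) L ↔
      ∃ L' : List (Fin n), L = L'.map (Fin.natAdd y) ∧
        seqThieleValid (fun j => s (y + j)) A S L' := by
  induction L with
  | nil => exact fun S => ⟨fun _ => ⟨[], rfl, trivial⟩, fun _ => trivial⟩
  | cons c L ih =>
    intro S
    constructor
    · intro hL
      obtain ⟨hc, hL⟩ := seqThieleValid_cons.mp hL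
      obtain ⟨j, -, rfl⟩ := exists_natAdd_of_notMem_addFillers hc.1
      rw [insert_natAdd_addFillers, ih] at hL
      obtain ⟨L', rfl, hL'⟩ := hL
      exact ⟨j :: L', rfl, seqThieleValid_cons.mpr ⟨isGreedyChoice_addFillers_iff.mp hc, hL'⟩⟩
    · rintro ⟨_ | ⟨j, L'⟩, hL, hL'⟩
      · cases hL
      obtain ⟨rfl, rfl⟩ := List.cons_eq_cons.mp hL
      obtain ⟨hj, hL'⟩ := seqThieleValid_cons.mp hL'
      refine seqThieleValid_cons.mpr ⟨isGreedyChoice_addFillers_iff.mpr hj, ?_⟩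
      rw [insert_natAdd_addFillers, ih]
      exact ⟨L', rfl, hL'⟩

theorem seqThiele_map_addFillers (hs : Monotone s) (hstrict : ∀ j < y, s j < s (j + 1))
    (hmiss : ∀ j : Fin n, ∃ T ∈ A, j ∉ T) (k : ℕ) :
    seqThiele s (A.map (addFillers y)) (y + k) =
      addFillers y '' seqThiele (fun j => s (y + j)) A k := by
  have hU : ∀ B ∈ A.map (addFillers y), addFillers y ∅ ⊆ B := by
    simp only [Multiset.mem_map]
    rintro _ ⟨T, -, rfl⟩
    exact addFillers_subset_addFillers (empty_subset T)
  ext W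
  constructor
  · rintro ⟨L, rfl, hlen, hL⟩
    have hmissF : ∀ z, z ∉ addFillers y ∅ → ∃ B ∈ A.map (addFillers y), z ∉ B := by
      intro z hz
      obtain ⟨j, -, rfl⟩ := exists_natAdd_of_notMem_addFillers hz
      obtain ⟨T, hT, hjT⟩ := hmiss j
      exact ⟨_, Multiset.mem_map_of_mem _ hT, natAdd_mem_addFillers.not.mpr hjT⟩
    obtain ⟨l, L', rfl, hcover, hcard⟩ := exists_append_of_seqThieleValid hs hU hmissF
      (by simpa [card_addFillers] using hstrict) L ∅ (empty_subset _) hL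
      (by simp [card_addFillers, hlen])
    rw [empty_union] at hcover
    rw [seqThieleValid_append, empty_union, hcover, seqThieleValid_map_addFillers_iff] at hL
    obtain ⟨-, L'', rfl, hL''⟩ := hL
    refine ⟨L''.toFinset, ⟨L'', rfl, ?_, hL''⟩, ?_⟩
    · simp only [List.length_append, List.length_map, card_empty, card_addFillers] at hlen hcard
      omega
    · rw [List.toFinset_append, hcover, addFillers_empty_union_toFinset_map]
  · rintro ⟨_, ⟨L, rfl, rfl, hL⟩, rfl⟩
    refine ⟨(List.finRange y).map (Fin.castAdd n) ++ L.map (Fin.natAdd y), ?_, by simp, ?_⟩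
    · rw [List.toFinset_append, toFinset_map_castAdd_finRange,
        addFillers_empty_union_toFinset_map]
    · rw [seqThieleValid_append, empty_union, toFinset_map_castAdd_finRange,
        seqThieleValid_map_addFillers_iff]
      refine ⟨seqThieleValid_of_forall_mem_common hs hU _
        ((List.nodup_finRange y).map (Fin.castAdd_injective _ _)) ?_ ∅ (empty_subset _)
        (by simp), L, rfl, hL⟩
      simp only [List.mem_map, List.mem_finRange, true_and]
      rintro _ ⟨i, rfl⟩
      exact castAdd_mem_addFillers i ∅

end Fillers

section Gadget

open Multiset in
def gadgetProfile (c : ℕ) : Multiset (Finset (Fin 4)) :=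
  replicate (c + 1) {0, 2} + replicate (c + 1) {0} + {{0, 1}} + replicate (2 * c + 3) {1} +
    replicate (c + 2) {2, 3} + replicate c {3}

variable {t : ℕ → ℚ} {c : ℕ}

theorem thieleScore_gadgetProfile (S : Finset (Fin 4)) :
    thieleScore t (gadgetProfile c) S =
      (c + 1) * t ({0, 2} ∩ S).card + (c + 1) * t ({0} ∩ S).card + t ({0, 1} ∩ S).card +
        (2 * c + 3) * t ({1} ∩ S).card + (c + 2) * t ({2, 3} ∩ S).card +
          c * t ({3} ∩ S).card := by
  simp only [thieleScore, gadgetProfile, Multiset.map_add, Multiset.sum_add,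
    Multiset.map_replicate, Multiset.sum_replicate, nsmul_eq_mul, Multiset.map_singleton,
    Multiset.sum_singleton]
  push_cast
  ring

theorem seqThiele_gadgetProfile (hp : 0 < t 1 - t 0) (hq : t 2 - t 1 < t 1 - t 0) :
    seqThiele t (gadgetProfile c) 3 = {{0, 1, 2}} := by
  have round₁ : ∀ x ∉ (∅ : Finset (Fin 4)), x ≠ 1 →
      thieleScore t (gadgetProfile c) {x} < thieleScore t (gadgetProfile c) {1} := by
    intro x hx hx1
    fin_cases x <;> simp +decide [thieleScore_gadgetProfile] at hx hx1 ⊢ <;> linarith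
  have round₂ : ∀ x ∉ ({1} : Finset (Fin 4)), x ≠ 2 →
      thieleScore t (gadgetProfile c) {x, 1} < thieleScore t (gadgetProfile c) {2, 1} := by
    intro x hx hx2
    fin_cases x <;> simp +decide [thieleScore_gadgetProfile] at hx hx2 ⊢ <;> linarith
  have round₃ : ∀ x ∉ ({2, 1} : Finset (Fin 4)), x ≠ 0 →
      thieleScore t (gadgetProfile c) {x, 2, 1} < thieleScore t (gadgetProfile c) {0, 2, 1} := by
    intro x hx hx0
    fin_cases x <;> simp +decide [thieleScore_gadgetProfile] at hx hx0 ⊢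
    linarith
  ext W
  constructor
  · rintro ⟨L, rfl, hlen, hL⟩
    obtain ⟨z₁, z₂, z₃, rfl⟩ := List.length_eq_three.mp hlen
    simp only [seqThieleValid_cons, insert_empty] at hL
    obtain ⟨h₁, h₂, h₃, -⟩ := hL
    obtain rfl := h₁.eq_of_forall_lt (by simp) round₁
    obtain rfl := h₂.eq_of_forall_lt (by simp) round₂
    obtain rfl := h₃.eq_of_forall_lt (by simp) round₃
    decide
  · rintro rfl
    refine ⟨[1, 2, 0], by decide, rfl, ?_⟩
    simp only [seqThieleValid_cons, insert_empty]
    exact ⟨isGreedyChoice_of_forall_lt (by simp) round₁,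
      isGreedyChoice_of_forall_lt (by simp) round₂,
      isGreedyChoice_of_forall_lt (by simp) round₃, trivial⟩

theorem mem_seqThiele_cons_gadgetProfile (hq₀ : t 1 ≤ t 2) (hq : t 2 - t 1 ≤ t 1 - t 0)
    (hc : 2 * (t 2 - t 1) ≤ c * ((t 1 - t 0) - (t 2 - t 1))) :
    {0, 1, 3} ∈ seqThiele t ({0, 2} ::ₘ gadgetProfile c) 3 := by
  refine ⟨[0, 1, 3], by decide, rfl, ?_⟩
  simp only [seqThieleValid_cons, insert_empty]
  refine ⟨⟨by simp, fun x hx => ?_⟩, ⟨by simp, fun x hx => ?_⟩, ⟨by simp, fun x hx => ?_⟩,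
    trivial⟩ <;>
    fin_cases x <;> simp +decide [thieleScore_cons, thieleScore_gadgetProfile] at hx ⊢ <;> linarith

theorem validProfile_cons_gadgetProfile : validProfile ({0, 2} ::ₘ gadgetProfile c) :=
  ⟨Multiset.cons_ne_zero, fun b hb => by
    simp only [gadgetProfile, Multiset.mem_cons, Multiset.mem_add, Multiset.mem_replicate,
      Multiset.mem_singleton] at hb
    rcases hb with rfl | ((((⟨-, rfl⟩ | ⟨-, rfl⟩) | rfl) | ⟨-, rfl⟩) | ⟨-, rfl⟩) | ⟨-, rfl⟩ <;>
      decide⟩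

theorem exists_notMem_gadgetProfile (j : Fin 4) : ∃ T ∈ gadgetProfile c, j ∉ T := by
  fin_cases j
  · exact ⟨{1}, by simp [gadgetProfile, Multiset.mem_replicate], by decide⟩
  all_goals exact ⟨{0}, by simp [gadgetProfile, Multiset.mem_replicate], by decide⟩

end Gadget

theorem kellyStrict_singleton_of_subset {b W W' : Finset C} {Y : Set (Finset C)}
    (hbW : b ⊆ W) (hW' : W' ∈ Y) (hbW' : ¬ b ⊆ W') : KellyStrict b {W} Y := by
  have hcard : ∀ V : Finset C, (V ∩ b).card ≤ (W ∩ b).card := fun V => by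
    rw [inter_eq_right.mpr hbW]
    exact card_le_card inter_subset_right
  refine ⟨fun V hV V' _ => hV ▸ hcard V', W, rfl, W', hW', ?_⟩
  rw [inter_eq_right.mpr hbW]
  exact card_lt_card ⟨inter_subset_right, fun h => hbW' (h.trans inter_subset_left)⟩

end SeqThiele

open SeqThiele

theorem seqThiele_nonAV_fails_participation_general
    (s : ℕ → ℚ)
    (hmono : ∀ x : ℕ, s x ≤ s (x + 1))
    (hconcave : ∀ x : ℕ, s (x + 2) - s (x + 1) ≤ s (x + 1) - s x)
    (hnotAV : ∃ x : ℕ, 1 ≤ x ∧ s (x + 1) - s x < s x - s (x - 1)) :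
    ∃ (m k : ℕ) (A : Multiset (Finset (Fin m))) (b : Finset (Fin m)),
      1 ≤ k ∧ k < m ∧ validProfile A ∧ b ∈ A ∧
      KellyStrict b (seqThiele s (A.erase b) k) (seqThiele s A k) := by
  obtain ⟨_, hx, hlt⟩ := hnotAV
  obtain ⟨y, rfl⟩ := Nat.exists_eq_add_of_le' hx
  have hq : s (y + 2) - s (y + 1) < s (y + 1) - s y := by simpa using hlt
  have hp : 0 < s (y + 1) - s y := by linarith [hmono (y + 1)]
  have hs : Monotone s := monotone_nat_of_le_succ hmono
  have hstrict : ∀ j < y, s j < s (j + 1) := fun j hj => by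
    have := antitone_nat_of_succ_le (f := fun j => s (j + 1) - s j) hconcave hj.le
    dsimp only at this
    linarith
  obtain ⟨c, hc⟩ := exists_nat_ge ((2 * (s (y + 2) - s (y + 1))) /
    ((s (y + 1) - s y) - (s (y + 2) - s (y + 1))))
  rw [div_le_iff₀ (sub_pos.mpr hq)] at hc
  have hmiss := exists_notMem_gadgetProfile (c := c)
  refine ⟨y + 4, y + 3, ({0, 2} ::ₘ gadgetProfile c).map (addFillers y), addFillers y {0, 2},
    by omega, by omega, validProfile_map_addFillers validProfile_cons_gadgetProfile,
    Multiset.mem_map_of_mem _ (Multiset.mem_cons_self _ _), ?_⟩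
  rw [Multiset.map_cons, Multiset.erase_cons_head, ← Multiset.map_cons,
    seqThiele_map_addFillers hs hstrict hmiss, seqThiele_gadgetProfile hp hq, Set.image_singleton,
    seqThiele_map_addFillers hs hstrict
      fun j => (hmiss j).imp fun _ ⟨hT, hjT⟩ => ⟨Multiset.mem_cons_of_mem hT, hjT⟩]
  refine kellyStrict_singleton_of_subset (addFillers_subset_addFillers (by decide))
    (Set.mem_image_of_mem _ (mem_seqThiele_cons_gadgetProfile (hmono (y + 1)) hq.le hc))
    fun h => ?_
  have h₂ : (2 : Fin 4) ∉ ({0, 1, 3} : Finset (Fin 4)) := by decide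
  exact natAdd_mem_addFillers.not.mpr h₂ (h (natAdd_mem_addFillers.mpr (by decide)))

/-- Every sequential Thiele rule other than AV fails participation: if the Thiele
scoring function `s` (with `s(0) = 0`, `s(1) > 0`, weakly increasing and concave) is
not linear, i.e. `s(x+1) - s(x) < s(x) - s(x-1)` for some `x ≥ 1`, then there are a
candidate set, a committee size, a profile, and a voter who strictly benefits from
abstaining (w.r.t. Kelly's extension). -/
theorem seqThiele_nonAV_fails_participation
    (s : ℕ → ℚ) (h0 : s 0 = 0) (h1 : 0 < s 1)
    (hmono : ∀ x : ℕ, s x ≤ s (x + 1))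
    (hconcave : ∀ x : ℕ, s (x + 2) - s (x + 1) ≤ s (x + 1) - s x)
    (hnotAV : ∃ x : ℕ, 1 ≤ x ∧ s (x + 1) - s x < s x - s (x - 1)) :
    ∃ (m k : ℕ) (A : Multiset (Finset (Fin m))) (b : Finset (Fin m)),
      1 ≤ k ∧ k < m ∧ validProfile A ∧ b ∈ A ∧
      KellyStrict b (seqThiele s (A.erase b) k) (seqThiele s A k) :=
  seqThiele_nonAV_fails_participation_general s hmono hconcave hnotAV
end

section
/- The method of equal shares fails participation: there exist a candidate set C, a committee size k, an approval profile A, and a voter i ∈ N_A such that f(A_{-i},k) ≻_i f(A,k), where f is MES. -/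
/-- Total budget of the supporters of candidate `c`, where the budget function `x` is
keyed by ballots (voters with equal ballots always carry equal budgets). -/
def supBudget {C : Type*} [DecidableEq C] (A : Multiset (Finset C))
    (x : Finset C → ℚ) (c : C) : ℚ :=
  ((A.filter fun b => c ∈ b).map x).sum

/-- Candidate `c` is affordable: its supporters have a total budget of at least 1. -/
def mesAfford {C : Type*} [DecidableEq C] (A : Multiset (Finset C))
    (x : Finset C → ℚ) (c : C) : Prop :=
  1 ≤ supBudget A x c

/-- `ρ` is the per-voter price of candidate `c`: splitting the cost 1 as equally as
possible, `Σ_{i ∈ N_A(c)} min(ρ, x_i) = 1`, with `ρ` minimal such. -/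
def mesRho {C : Type*} [DecidableEq C] (A : Multiset (Finset C))
    (x : Finset C → ℚ) (c : C) (ρ : ℚ) : Prop :=
  ((A.filter fun b => c ∈ b).map fun b => min ρ (x b)).sum = 1 ∧
  ∀ ρ' : ℚ, ((A.filter fun b => c ∈ b).map fun b => min ρ' (x b)).sum = 1 → ρ ≤ ρ'

/-- `mesPhase1 A x E L xf`: starting from budgets `x` and already elected candidates
`E`, the sequence `L` is a valid run of Phase 1 of MES ending with budgets `xf`: each
elected candidate is affordable and minimizes the maximal per-voter payment `ρ` among
the affordable unelected candidates, and budgets are reduced accordingly. -/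
def mesPhase1 {C : Type*} [DecidableEq C] (A : Multiset (Finset C)) :
    (Finset C → ℚ) → Finset C → List C → (Finset C → ℚ) → Prop
  | x, _, [], xf => xf = x
  | x, E, c :: rest, xf =>
      c ∉ E ∧ mesAfford A x c ∧
      ∃ ρ : ℚ, mesRho A x c ρ ∧
        (∀ d : C, d ∉ E → mesAfford A x d → ∀ ρ' : ℚ, mesRho A x d ρ' → ρ ≤ ρ') ∧
        mesPhase1 A (fun b => if c ∈ b then x b - min ρ (x b) else x b)
          (insert c E) rest xf

/-- In the Phragmén completion phase, `buyTime A x c` is the time at which candidate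
`c` would be bought when every voter's budget grows uniformly from `x`: the first time
`t ≥ 0` at which the supporters' total budget reaches 1. -/
def buyTime {C : Type*} [DecidableEq C] (A : Multiset (Finset C))
    (x : Finset C → ℚ) (c : C) : ℚ :=
  max 0 ((1 - supBudget A x c) / ((Multiset.card (A.filter fun b => c ∈ b) : ℚ)))

/-- `mesPhase2 A x E L`: starting from budgets `x` (kept from Phase 1) and already
elected candidates `E`, the sequence `L` is a valid run of the seqPhragmén completion
(Phase 2) of MES: budgets grow uniformly over time, each elected candidate is bought
as soon as its supporters' total budget reaches 1 (i.e. it minimizes the buying time),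
whereupon its supporters' budgets are reset to 0. -/
def mesPhase2 {C : Type*} [DecidableEq C] (A : Multiset (Finset C)) :
    (Finset C → ℚ) → Finset C → List C → Prop
  | _, _, [] => True
  | x, E, c :: rest =>
      c ∉ E ∧ (A.filter fun b => c ∈ b) ≠ 0 ∧
      (∀ d : C, d ∉ E → (A.filter fun b => d ∈ b) ≠ 0 →
        buyTime A x c ≤ buyTime A x d) ∧
      mesPhase2 A (fun b => if c ∈ b then 0 else x b + buyTime A x c) (insert c E) rest

/-- The method of equal shares (with the seqPhragmén completion): every voter starts
with budget `k/n`; Phase 1 runs until either `k` candidates are elected or no further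
candidate is affordable, in which case Phase 2 completes the committee. -/
def mes {C : Type*} [DecidableEq C] (A : Multiset (Finset C)) (k : ℕ) :
    Set (Finset C) :=
  {W | ∃ (L1 : List C) (xf : Finset C → ℚ),
      mesPhase1 A (fun _ => (k : ℚ) / (Multiset.card A : ℚ)) ∅ L1 xf ∧
      ((L1.length = k ∧ W = L1.toFinset) ∨
        (L1.length < k ∧
          (∀ c : C, c ∉ L1.toFinset → ¬ mesAfford A xf c) ∧
          ∃ L2 : List C, mesPhase2 A xf L1.toFinset L2 ∧
            (L1 ++ L2).length = k ∧ W = (L1 ++ L2).toFinset))}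

lemma mesRho_unique {C : Type*} [DecidableEq C] {A : Multiset (Finset C)}
    {x : Finset C → ℚ} {c : C} {ρ ρ' : ℚ} (h : mesRho A x c ρ) (h' : mesRho A x c ρ') :
    ρ = ρ' := le_antisymm (h.2 _ h'.1) (h'.2 _ h.1)

def s1 : Finset (Fin 4) := {0,1}

def s2 : Finset (Fin 4) := {0,1,2}

def s3 : Finset (Fin 4) := {2,3}

def PA : Multiset (Finset (Fin 4)) := ↑[s1,s1,s2,s2,s3,s3]

def PB : Multiset (Finset (Fin 4)) := ↑[s1,s1,s2,s3,s3]

lemma fB0 : PB.filter (fun s => (0:Fin 4) ∈ s) = ↑[s1,s1,s2] := by decide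

lemma fB1 : PB.filter (fun s => (1:Fin 4) ∈ s) = ↑[s1,s1,s2] := by decide

lemma fB2 : PB.filter (fun s => (2:Fin 4) ∈ s) = ↑[s2,s3,s3] := by decide

lemma fB3 : PB.filter (fun s => (3:Fin 4) ∈ s) = ↑[s3,s3] := by decide

lemma fA0 : PA.filter (fun s => (0:Fin 4) ∈ s) = ↑[s1,s1,s2,s2] := by decide

lemma fA1 : PA.filter (fun s => (1:Fin 4) ∈ s) = ↑[s1,s1,s2,s2] := by decide

lemma fA2 : PA.filter (fun s => (2:Fin 4) ∈ s) = ↑[s2,s2,s3,s3] := by decide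

lemma fA3 : PA.filter (fun s => (3:Fin 4) ∈ s) = ↑[s3,s3] := by decide

lemma sB0 (x : Finset (Fin 4) → ℚ) : supBudget PB x 0 = x s1 + x s1 + x s2 := by
  rw [supBudget, fB0]; simp [Multiset.map_coe, Multiset.sum_coe]; try ring

lemma sB1 (x : Finset (Fin 4) → ℚ) : supBudget PB x 1 = x s1 + x s1 + x s2 := by
  rw [supBudget, fB1]; simp [Multiset.map_coe, Multiset.sum_coe]; try ring

lemma sB2 (x : Finset (Fin 4) → ℚ) : supBudget PB x 2 = x s2 + x s3 + x s3 := by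
  rw [supBudget, fB2]; simp [Multiset.map_coe, Multiset.sum_coe]; try ring

lemma sB3 (x : Finset (Fin 4) → ℚ) : supBudget PB x 3 = x s3 + x s3 := by
  rw [supBudget, fB3]; simp [Multiset.map_coe, Multiset.sum_coe]; try ring

lemma sA0 (x : Finset (Fin 4) → ℚ) : supBudget PA x 0 = x s1 + x s1 + x s2 + x s2 := by
  rw [supBudget, fA0]; simp [Multiset.map_coe, Multiset.sum_coe]; try ring

lemma sA1 (x : Finset (Fin 4) → ℚ) : supBudget PA x 1 = x s1 + x s1 + x s2 + x s2 := by
  rw [supBudget, fA1]; simp [Multiset.map_coe, Multiset.sum_coe]; try ring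

lemma sA2 (x : Finset (Fin 4) → ℚ) : supBudget PA x 2 = x s2 + x s2 + x s3 + x s3 := by
  rw [supBudget, fA2]; simp [Multiset.map_coe, Multiset.sum_coe]; try ring

lemma sA3 (x : Finset (Fin 4) → ℚ) : supBudget PA x 3 = x s3 + x s3 := by
  rw [supBudget, fA3]; simp [Multiset.map_coe, Multiset.sum_coe]; try ring

lemma btB1 (x : Finset (Fin 4) → ℚ) :
    buyTime PB x 1 = max 0 ((1 - (x s1 + x s1 + x s2))/3) := by
  rw [buyTime, ← sB1]; rw [fB1]; norm_num

lemma btB0 (x : Finset (Fin 4) → ℚ) :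
    buyTime PB x 0 = max 0 ((1 - (x s1 + x s1 + x s2))/3) := by
  rw [buyTime, ← sB0]; rw [fB0]; norm_num

lemma btB3 (x : Finset (Fin 4) → ℚ) :
    buyTime PB x 3 = max 0 ((1 - (x s3 + x s3))/2) := by
  rw [buyTime, ← sB3]; rw [fB3]; norm_num

-- rho lemmas for B

lemma rB0 (x : Finset (Fin 4) → ℚ) (h1 : x s1 = 3/5) (h2 : x s2 = 3/5) :
    mesRho PB x 0 (1/3) := by
  rw [mesRho, fB0]
  simp only [Multiset.map_coe, Multiset.sum_coe, List.map, List.sum_cons, List.sum_nil,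
    h1, h2]
  constructor
  · norm_num
  · intro ρ' h
    have a1 := min_le_left ρ' (3/5 : ℚ)
    linarith

lemma rB1 (x : Finset (Fin 4) → ℚ) (h1 : x s1 = 3/5) (h2 : x s2 = 3/5) :
    mesRho PB x 1 (1/3) := by
  rw [mesRho, fB1]
  simp only [Multiset.map_coe, Multiset.sum_coe, List.map, List.sum_cons, List.sum_nil, h1, h2]
  refine ⟨by norm_num, fun ρ' h => ?_⟩
  have a1 := min_le_left ρ' (3/5 : ℚ); linarith

lemma rB2 (x : Finset (Fin 4) → ℚ) (h2 : x s2 = 3/5) (h3 : x s3 = 3/5) :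
    mesRho PB x 2 (1/3) := by
  rw [mesRho, fB2]
  simp only [Multiset.map_coe, Multiset.sum_coe, List.map, List.sum_cons, List.sum_nil, h2, h3]
  refine ⟨by norm_num, fun ρ' h => ?_⟩
  have a1 := min_le_left ρ' (3/5 : ℚ); linarith

lemma rB3 (x : Finset (Fin 4) → ℚ) (h3 : x s3 = 3/5) :
    mesRho PB x 3 (1/2) := by
  rw [mesRho, fB3]
  simp only [Multiset.map_coe, Multiset.sum_coe, List.map, List.sum_cons, List.sum_nil, h3]
  refine ⟨by norm_num, fun ρ' h => ?_⟩
  have a1 := min_le_left ρ' (3/5 : ℚ); linarith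

lemma rB2' (x : Finset (Fin 4) → ℚ) (h2 : x s2 = 4/15) (h3 : x s3 = 3/5) :
    mesRho PB x 2 (11/30) := by
  rw [mesRho, fB2]
  simp only [Multiset.map_coe, Multiset.sum_coe, List.map, List.sum_cons, List.sum_nil, h2, h3]
  refine ⟨by norm_num, fun ρ' h => ?_⟩
  have a1 := min_le_left ρ' (3/5 : ℚ); have a2 := min_le_right ρ' (4/15 : ℚ); linarith

lemma rB0' (x : Finset (Fin 4) → ℚ) (h1 : x s1 = 3/5) (h2 : x s2 = 4/15) :
    mesRho PB x 0 (11/30) := by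
  rw [mesRho, fB0]
  simp only [Multiset.map_coe, Multiset.sum_coe, List.map, List.sum_cons, List.sum_nil, h1, h2]
  refine ⟨by norm_num, fun ρ' h => ?_⟩
  have a1 := min_le_left ρ' (3/5 : ℚ); have a2 := min_le_right ρ' (4/15 : ℚ); linarith

lemma rB1' (x : Finset (Fin 4) → ℚ) (h1 : x s1 = 3/5) (h2 : x s2 = 4/15) :
    mesRho PB x 1 (11/30) := by
  rw [mesRho, fB1]
  simp only [Multiset.map_coe, Multiset.sum_coe, List.map, List.sum_cons, List.sum_nil, h1, h2]
  refine ⟨by norm_num, fun ρ' h => ?_⟩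
  have a1 := min_le_left ρ' (3/5 : ℚ); have a2 := min_le_right ρ' (4/15 : ℚ); linarith

lemma rA0 (x : Finset (Fin 4) → ℚ) (h1 : x s1 = 1/2) (h2 : x s2 = 1/2) :
    mesRho PA x 0 (1/4) := by
  rw [mesRho, fA0]
  simp only [Multiset.map_coe, Multiset.sum_coe, List.map, List.sum_cons, List.sum_nil, h1, h2]
  refine ⟨by norm_num, fun ρ' h => ?_⟩
  have a1 := min_le_left ρ' (1/2 : ℚ); linarith

lemma rA1 (x : Finset (Fin 4) → ℚ) (h1 : x s1 = 1/2) (h2 : x s2 = 1/2) :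
    mesRho PA x 1 (1/4) := by
  rw [mesRho, fA1]
  simp only [Multiset.map_coe, Multiset.sum_coe, List.map, List.sum_cons, List.sum_nil, h1, h2]
  refine ⟨by norm_num, fun ρ' h => ?_⟩
  have a1 := min_le_left ρ' (1/2 : ℚ); linarith

lemma rA1' (x : Finset (Fin 4) → ℚ) (h1 : x s1 = 1/4) (h2 : x s2 = 1/4) :
    mesRho PA x 1 (1/4) := by
  rw [mesRho, fA1]
  simp only [Multiset.map_coe, Multiset.sum_coe, List.map, List.sum_cons, List.sum_nil, h1, h2]
  refine ⟨by norm_num, fun ρ' h => ?_⟩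
  have a1 := min_le_left ρ' (1/4 : ℚ); linarith

lemma rA2 (x : Finset (Fin 4) → ℚ) (h2 : x s2 = 1/2) (h3 : x s3 = 1/2) :
    mesRho PA x 2 (1/4) := by
  rw [mesRho, fA2]
  simp only [Multiset.map_coe, Multiset.sum_coe, List.map, List.sum_cons, List.sum_nil, h2, h3]
  refine ⟨by norm_num, fun ρ' h => ?_⟩
  have a1 := min_le_left ρ' (1/2 : ℚ); linarith

lemma rA2' (x : Finset (Fin 4) → ℚ) (h2 : x s2 = 1/4) (h3 : x s3 = 1/2) :
    mesRho PA x 2 (1/4) := by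
  rw [mesRho, fA2]
  simp only [Multiset.map_coe, Multiset.sum_coe, List.map, List.sum_cons, List.sum_nil, h2, h3]
  refine ⟨by norm_num, fun ρ' h => ?_⟩
  have a1 := min_le_left ρ' (1/4 : ℚ); have a2 := min_le_left ρ' (1/2 : ℚ); linarith

lemma rA2'' (x : Finset (Fin 4) → ℚ) (h2 : x s2 = 0) (h3 : x s3 = 1/2) :
    mesRho PA x 2 (1/2) := by
  rw [mesRho, fA2]
  simp only [Multiset.map_coe, Multiset.sum_coe, List.map, List.sum_cons, List.sum_nil, h2, h3]
  refine ⟨by norm_num, fun ρ' h => ?_⟩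
  have a1 := min_le_left ρ' (1/2 : ℚ); have a2 := min_le_right ρ' (0 : ℚ); linarith

lemma rA3 (x : Finset (Fin 4) → ℚ) (h3 : x s3 = 1/2) :
    mesRho PA x 3 (1/2) := by
  rw [mesRho, fA3]
  simp only [Multiset.map_coe, Multiset.sum_coe, List.map, List.sum_cons, List.sum_nil, h3]
  refine ⟨by norm_num, fun ρ' h => ?_⟩
  have a1 := min_le_left ρ' (1/2 : ℚ); linarith

@[simp] lemma m0s1 : (0:Fin 4) ∈ s1 := by decide

@[simp] lemma m1s1 : (1:Fin 4) ∈ s1 := by decide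

@[simp] lemma m2s1 : ¬ (2:Fin 4) ∈ s1 := by decide

@[simp] lemma m3s1 : ¬ (3:Fin 4) ∈ s1 := by decide

@[simp] lemma m0s2 : (0:Fin 4) ∈ s2 := by decide

@[simp] lemma m1s2 : (1:Fin 4) ∈ s2 := by decide

@[simp] lemma m2s2 : (2:Fin 4) ∈ s2 := by decide

@[simp] lemma m3s2 : ¬ (3:Fin 4) ∈ s2 := by decide

@[simp] lemma m0s3 : ¬ (0:Fin 4) ∈ s3 := by decide

@[simp] lemma m1s3 : ¬ (1:Fin 4) ∈ s3 := by decide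

@[simp] lemma m2s3 : (2:Fin 4) ∈ s3 := by decide

@[simp] lemma m3s3 : (3:Fin 4) ∈ s3 := by decide

def upd (c : Fin 4) (ρ : ℚ) (x : Finset (Fin 4) → ℚ) : Finset (Fin 4) → ℚ :=
  fun b => if c ∈ b then x b - min ρ (x b) else x b

def x0A : Finset (Fin 4) → ℚ := fun _ => 1/2

def xA1 := upd 0 (1/4) x0A

def xA2 := upd 1 (1/4) xA1

def xA3 := upd 3 (1/2) xA2

lemma xA1v1 : xA1 s1 = 1/4 := by simp [xA1, upd, x0A]; norm_num

lemma xA1v2 : xA1 s2 = 1/4 := by simp [xA1, upd, x0A]; norm_num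

lemma xA1v3 : xA1 s3 = 1/2 := by simp [xA1, upd, x0A]

lemma xA2v1 : xA2 s1 = 0 := by simp [xA2, upd, xA1v1]; try norm_num

lemma xA2v2 : xA2 s2 = 0 := by simp [xA2, upd, xA1v2]; try norm_num

lemma xA2v3 : xA2 s3 = 1/2 := by simp [xA2, upd, xA1v3]

theorem phase1A : mesPhase1 PA x0A ∅ [0,1,3] xA3 := by
  refine ⟨by simp, by rw [mesAfford, sA0]; norm_num [x0A], 1/4,
    rA0 x0A rfl rfl, ?_, ?_⟩
  · intro d _ haff ρ' hρ'
    fin_cases d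
    · rw [mesRho_unique hρ' (rA0 x0A rfl rfl)]
    · rw [mesRho_unique hρ' (rA1 x0A rfl rfl)]
    · rw [mesRho_unique hρ' (rA2 x0A rfl rfl)]
    · rw [mesRho_unique hρ' (rA3 x0A rfl)]; norm_num
  show mesPhase1 PA xA1 _ _ _
  refine ⟨by simp, by rw [mesAfford, sA1]; norm_num [xA1v1, xA1v2], 1/4,
    rA1' xA1 xA1v1 xA1v2, ?_, ?_⟩
  · intro d hd haff ρ' hρ'
    fin_cases d
    · simp at hd
    · rw [mesRho_unique hρ' (rA1' xA1 xA1v1 xA1v2)]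
    · rw [mesRho_unique hρ' (rA2' xA1 xA1v2 xA1v3)]
    · rw [mesRho_unique hρ' (rA3 xA1 xA1v3)]; norm_num
  show mesPhase1 PA xA2 _ _ _
  refine ⟨by simp, by rw [mesAfford, sA3]; norm_num [xA2v3], 1/2,
    rA3 xA2 xA2v3, ?_, ?_⟩
  · intro d hd haff ρ' hρ'
    fin_cases d
    · simp at hd
    · simp at hd
    · rw [mesRho_unique hρ' (rA2'' xA2 xA2v2 xA2v3)]
    · rw [mesRho_unique hρ' (rA3 xA2 xA2v3)]
  show mesPhase1 PA xA3 _ _ _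
  rfl

lemma hxA : (fun _ : Finset (Fin 4) => ((3:ℕ) : ℚ) / (Multiset.card PA : ℚ)) = x0A := by
  funext _
  rw [show Multiset.card PA = 6 from by decide, x0A]
  norm_num

theorem memA : ({0,1,3} : Finset (Fin 4)) ∈ mes PA 3 :=
  ⟨[0,1,3], xA3, by rw [hxA]; exact phase1A, Or.inl ⟨rfl, by decide⟩⟩

def x0B : Finset (Fin 4) → ℚ := fun _ => 3/5

def xB1 := upd 0 (1/3) x0B

def xB2 := upd 2 (11/30) xB1

lemma xB1v1 : xB1 s1 = 4/15 := by simp [xB1, upd, x0B]; try norm_num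

lemma xB1v2 : xB1 s2 = 4/15 := by simp [xB1, upd, x0B]; try norm_num

lemma xB1v3 : xB1 s3 = 3/5 := by simp [xB1, upd, x0B]

lemma xB2v1 : xB2 s1 = 4/15 := by simp [xB2, upd, xB1v1]

lemma xB2v2 : xB2 s2 = 0 := by simp [xB2, upd, xB1v2]; try norm_num

lemma xB2v3 : xB2 s3 = 7/30 := by simp [xB2, upd, xB1v3]; try norm_num

theorem phase1B : mesPhase1 PB x0B ∅ [0,2] xB2 := by
  refine ⟨by simp, by rw [mesAfford, sB0]; norm_num [x0B], 1/3,
    rB0 x0B rfl rfl, ?_, ?_⟩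
  · intro d _ haff ρ' hρ'
    fin_cases d
    · rw [mesRho_unique hρ' (rB0 x0B rfl rfl)]
    · rw [mesRho_unique hρ' (rB1 x0B rfl rfl)]
    · rw [mesRho_unique hρ' (rB2 x0B rfl rfl)]
    · rw [mesRho_unique hρ' (rB3 x0B rfl)]; norm_num
  show mesPhase1 PB xB1 _ _ _
  refine ⟨by simp, by rw [mesAfford, sB2]; norm_num [xB1v2, xB1v3], 11/30,
    rB2' xB1 xB1v2 xB1v3, ?_, ?_⟩
  · intro d hd haff ρ' hρ'
    fin_cases d
    · simp at hd
    · exact absurd haff (show ¬ mesAfford PB xB1 1 by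
        rw [mesAfford, sB1]; norm_num [xB1v1, xB1v2])
    · rw [mesRho_unique hρ' (rB2' xB1 xB1v2 xB1v3)]
    · rw [mesRho_unique hρ' (rB3 xB1 xB1v3)]; norm_num
  show mesPhase1 PB xB2 _ _ _
  rfl

theorem phase2B : mesPhase2 PB xB2 ([0,2] : List (Fin 4)).toFinset [1] := by
  refine ⟨by decide, by rw [fB1]; simp, ?_, trivial⟩
  intro d hd hne
  fin_cases d
  · simp at hd
  · exact le_refl _
  · simp at hd
  · show buyTime PB xB2 1 ≤ buyTime PB xB2 3
    rw [btB1, btB3, xB2v1, xB2v2, xB2v3]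
    rw [show ((1 : ℚ) - (4/15 + 4/15 + 0))/3 = 7/45 by norm_num,
        show ((1 : ℚ) - (7/30 + 7/30))/2 = 4/15 by norm_num,
        max_eq_right (by norm_num : (0:ℚ) ≤ 7/45),
        max_eq_right (by norm_num : (0:ℚ) ≤ 4/15)]
    norm_num

lemma hxB : (fun _ : Finset (Fin 4) => ((3:ℕ) : ℚ) / (Multiset.card PB : ℚ)) = x0B := by
  funext _
  rw [show Multiset.card PB = 5 from by decide, x0B]
  norm_num

theorem memB : ({0,1,2} : Finset (Fin 4)) ∈ mes PB 3 := by
  refine ⟨[0,2], xB2, by rw [hxB]; exact phase1B,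
    Or.inr ⟨by norm_num, ?_, [1], phase2B, rfl, by decide⟩⟩
  intro c hc
  fin_cases c
  · simp at hc
  · show ¬ mesAfford PB xB2 1
    rw [mesAfford, sB1]; norm_num [xB2v1, xB2v2]
  · simp at hc
  · show ¬ mesAfford PB xB2 3
    rw [mesAfford, sB3]; norm_num [xB2v3]

lemma hc4 : ∀ c : Fin 4, c = 0 ∨ c = 1 ∨ c = 2 ∨ c = 3 := by decide

-- extra phase-1 states for the reverse analysis of PB

def xB1' := upd 1 (1/3) x0B

def xB12 := upd 2 (11/30) xB1'

def xC1 := upd 2 (1/3) x0B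

def xC20 := upd 0 (11/30) xC1

def xC21 := upd 1 (11/30) xC1

lemma xB1'v1 : xB1' s1 = 4/15 := by simp [xB1', upd, x0B]; try norm_num

lemma xB1'v2 : xB1' s2 = 4/15 := by simp [xB1', upd, x0B]; try norm_num

lemma xB1'v3 : xB1' s3 = 3/5 := by simp [xB1', upd, x0B]

lemma xB12v1 : xB12 s1 = 4/15 := by simp [xB12, upd, xB1'v1]

lemma xB12v2 : xB12 s2 = 0 := by simp [xB12, upd, xB1'v2]; try norm_num

lemma xB12v3 : xB12 s3 = 7/30 := by simp [xB12, upd, xB1'v3]; try norm_num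

lemma xC1v1 : xC1 s1 = 3/5 := by simp [xC1, upd, x0B]

lemma xC1v2 : xC1 s2 = 4/15 := by simp [xC1, upd, x0B]; try norm_num

lemma xC1v3 : xC1 s3 = 4/15 := by simp [xC1, upd, x0B]; try norm_num

lemma xC20v1 : xC20 s1 = 7/30 := by simp [xC20, upd, xC1v1]; try norm_num

lemma xC20v2 : xC20 s2 = 0 := by simp [xC20, upd, xC1v2]; try norm_num

lemma xC20v3 : xC20 s3 = 4/15 := by simp [xC20, upd, xC1v3]

lemma xC21v1 : xC21 s1 = 7/30 := by simp [xC21, upd, xC1v1]; try norm_num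

lemma xC21v2 : xC21 s2 = 0 := by simp [xC21, upd, xC1v2]; try norm_num

lemma xC21v3 : xC21 s3 = 4/15 := by simp [xC21, upd, xC1v3]

-- phase-2 endgames: which candidate is bought

lemma e_xB2 {e : Fin 4} {L : List (Fin 4)}
    (h : mesPhase2 PB xB2 ((0:Fin 4) :: 2 :: []).toFinset (e :: L)) : e = 1 := by
  obtain ⟨hne, -, hbt, -⟩ := h
  rcases hc4 e with rfl | rfl | rfl | rfl
  · exact absurd (by decide) hne
  · rfl
  · exact absurd (by decide) hne
  · exfalso
    have hb : buyTime PB xB2 3 ≤ buyTime PB xB2 1 := hbt 1 (by decide) (by rw [fB1]; simp)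
    rw [btB1, btB3, xB2v1, xB2v2, xB2v3,
      show ((1 : ℚ) - (4/15 + 4/15 + 0))/3 = 7/45 by norm_num,
      show ((1 : ℚ) - (7/30 + 7/30))/2 = 4/15 by norm_num,
      max_eq_right (by norm_num : (0:ℚ) ≤ 7/45),
      max_eq_right (by norm_num : (0:ℚ) ≤ 4/15)] at hb
    norm_num at hb

lemma e_xB12 {e : Fin 4} {L : List (Fin 4)}
    (h : mesPhase2 PB xB12 ((1:Fin 4) :: 2 :: []).toFinset (e :: L)) : e = 0 := by
  obtain ⟨hne, -, hbt, -⟩ := h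
  rcases hc4 e with rfl | rfl | rfl | rfl
  · rfl
  · exact absurd (by decide) hne
  · exact absurd (by decide) hne
  · exfalso
    have hb : buyTime PB xB12 3 ≤ buyTime PB xB12 0 := hbt 0 (by decide) (by rw [fB0]; simp)
    rw [btB0, btB3, xB12v1, xB12v2, xB12v3,
      show ((1 : ℚ) - (4/15 + 4/15 + 0))/3 = 7/45 by norm_num,
      show ((1 : ℚ) - (7/30 + 7/30))/2 = 4/15 by norm_num,
      max_eq_right (by norm_num : (0:ℚ) ≤ 7/45),
      max_eq_right (by norm_num : (0:ℚ) ≤ 4/15)] at hb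
    norm_num at hb

lemma e_xC20 {e : Fin 4} {L : List (Fin 4)}
    (h : mesPhase2 PB xC20 ((2:Fin 4) :: 0 :: []).toFinset (e :: L)) : e = 1 := by
  obtain ⟨hne, -, hbt, -⟩ := h
  rcases hc4 e with rfl | rfl | rfl | rfl
  · exact absurd (by decide) hne
  · rfl
  · exact absurd (by decide) hne
  · exfalso
    have hb : buyTime PB xC20 3 ≤ buyTime PB xC20 1 := hbt 1 (by decide) (by rw [fB1]; simp)
    rw [btB1, btB3, xC20v1, xC20v2, xC20v3,
      show ((1 : ℚ) - (7/30 + 7/30 + 0))/3 = 8/45 by norm_num,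
      show ((1 : ℚ) - (4/15 + 4/15))/2 = 7/30 by norm_num,
      max_eq_right (by norm_num : (0:ℚ) ≤ 8/45),
      max_eq_right (by norm_num : (0:ℚ) ≤ 7/30)] at hb
    norm_num at hb

lemma e_xC21 {e : Fin 4} {L : List (Fin 4)}
    (h : mesPhase2 PB xC21 ((2:Fin 4) :: 1 :: []).toFinset (e :: L)) : e = 0 := by
  obtain ⟨hne, -, hbt, -⟩ := h
  rcases hc4 e with rfl | rfl | rfl | rfl
  · rfl
  · exact absurd (by decide) hne
  · exact absurd (by decide) hne
  · exfalso
    have hb : buyTime PB xC21 3 ≤ buyTime PB xC21 0 := hbt 0 (by decide) (by rw [fB0]; simp)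
    rw [btB0, btB3, xC21v1, xC21v2, xC21v3,
      show ((1 : ℚ) - (7/30 + 7/30 + 0))/3 = 8/45 by norm_num,
      show ((1 : ℚ) - (4/15 + 4/15))/2 = 7/30 by norm_num,
      max_eq_right (by norm_num : (0:ℚ) ≤ 8/45),
      max_eq_right (by norm_num : (0:ℚ) ≤ 7/30)] at hb
    norm_num at hb

theorem revB : ∀ W ∈ mes PB 3, W = ({0,1,2} : Finset (Fin 4)) := by
  rintro W ⟨L1, xf, h1, hbr⟩
  rw [hxB] at h1
  rcases L1 with _ | ⟨c1, L1⟩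
  · rcases hbr with ⟨hlen, -⟩ | ⟨-, hna, -⟩
    · simp at hlen
    · subst h1
      exact absurd (show mesAfford PB x0B 0 by rw [mesAfford, sB0]; norm_num [x0B])
        (hna 0 (by decide))
  · obtain ⟨-, haff1, ρ1, hρ1, hmin1, h1⟩ := h1
    rcases hc4 c1 with rfl | rfl | rfl | rfl
    · -- c1 = 0
      have e1 : ρ1 = 1/3 := mesRho_unique hρ1 (rB0 x0B rfl rfl)
      subst e1
      replace h1 : mesPhase1 PB xB1 (insert 0 ∅) L1 xf := h1
      rcases L1 with _ | ⟨c2, L1⟩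
      · rcases hbr with ⟨hlen, -⟩ | ⟨-, hna, -⟩
        · simp at hlen
        · subst h1
          exact absurd (show mesAfford PB xB1 2 by
            rw [mesAfford, sB2]; norm_num [xB1v2, xB1v3]) (hna 2 (by decide))
      · obtain ⟨hne2, haff2, ρ2, hρ2, hmin2, h1⟩ := h1
        rcases hc4 c2 with rfl | rfl | rfl | rfl
        · exact absurd (by decide) hne2
        · exact absurd haff2 (show ¬ mesAfford PB xB1 1 by
            rw [mesAfford, sB1]; norm_num [xB1v1, xB1v2])
        · have e2 : ρ2 = 11/30 := mesRho_unique hρ2 (rB2' xB1 xB1v2 xB1v3)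
          subst e2
          replace h1 : mesPhase1 PB xB2 (insert 2 (insert 0 ∅)) L1 xf := h1
          rcases L1 with _ | ⟨c3, L1⟩
          · subst h1
            rcases hbr with ⟨hlen, -⟩ | ⟨-, -, L2, h2, hlen, hW⟩
            · simp at hlen
            · have hL2 : L2.length = 1 := by simpa using hlen
              rcases L2 with _ | ⟨e, L2'⟩
              · simp at hL2
              · have hnil : L2' = [] := by simpa using hL2
                subst hnil
                have he : e = 1 := e_xB2 h2
                subst he
                rw [hW]; decide
          · exfalso
            obtain ⟨hne3, haff3, -⟩ := h1
            rcases hc4 c3 with rfl | rfl | rfl | rfl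
            · exact hne3 (by decide)
            · exact (show ¬ mesAfford PB xB2 1 by
                rw [mesAfford, sB1]; norm_num [xB2v1, xB2v2]) haff3
            · exact hne3 (by decide)
            · exact (show ¬ mesAfford PB xB2 3 by
                rw [mesAfford, sB3]; norm_num [xB2v3]) haff3
        · exfalso
          have e2 : ρ2 = 1/2 := mesRho_unique hρ2 (rB3 xB1 xB1v3)
          have hcon := hmin2 2 (by decide) (show mesAfford PB xB1 2 by
            rw [mesAfford, sB2]; norm_num [xB1v2, xB1v3]) (11/30) (rB2' xB1 xB1v2 xB1v3)
          rw [e2] at hcon; norm_num at hcon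
    · -- c1 = 1
      have e1 : ρ1 = 1/3 := mesRho_unique hρ1 (rB1 x0B rfl rfl)
      subst e1
      replace h1 : mesPhase1 PB xB1' (insert 1 ∅) L1 xf := h1
      rcases L1 with _ | ⟨c2, L1⟩
      · rcases hbr with ⟨hlen, -⟩ | ⟨-, hna, -⟩
        · simp at hlen
        · subst h1
          exact absurd (show mesAfford PB xB1' 2 by
            rw [mesAfford, sB2]; norm_num [xB1'v2, xB1'v3]) (hna 2 (by decide))
      · obtain ⟨hne2, haff2, ρ2, hρ2, hmin2, h1⟩ := h1
        rcases hc4 c2 with rfl | rfl | rfl | rfl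
        · exact absurd haff2 (show ¬ mesAfford PB xB1' 0 by
            rw [mesAfford, sB0]; norm_num [xB1'v1, xB1'v2])
        · exact absurd (by decide) hne2
        · have e2 : ρ2 = 11/30 := mesRho_unique hρ2 (rB2' xB1' xB1'v2 xB1'v3)
          subst e2
          replace h1 : mesPhase1 PB xB12 (insert 2 (insert 1 ∅)) L1 xf := h1
          rcases L1 with _ | ⟨c3, L1⟩
          · subst h1
            rcases hbr with ⟨hlen, -⟩ | ⟨-, -, L2, h2, hlen, hW⟩
            · simp at hlen
            · have hL2 : L2.length = 1 := by simpa using hlen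
              rcases L2 with _ | ⟨e, L2'⟩
              · simp at hL2
              · have hnil : L2' = [] := by simpa using hL2
                subst hnil
                have he : e = 0 := e_xB12 h2
                subst he
                rw [hW]; decide
          · exfalso
            obtain ⟨hne3, haff3, -⟩ := h1
            rcases hc4 c3 with rfl | rfl | rfl | rfl
            · exact (show ¬ mesAfford PB xB12 0 by
                rw [mesAfford, sB0]; norm_num [xB12v1, xB12v2]) haff3
            · exact hne3 (by decide)
            · exact hne3 (by decide)
            · exact (show ¬ mesAfford PB xB12 3 by
                rw [mesAfford, sB3]; norm_num [xB12v3]) haff3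
        · exfalso
          have e2 : ρ2 = 1/2 := mesRho_unique hρ2 (rB3 xB1' xB1'v3)
          have hcon := hmin2 2 (by decide) (show mesAfford PB xB1' 2 by
            rw [mesAfford, sB2]; norm_num [xB1'v2, xB1'v3]) (11/30) (rB2' xB1' xB1'v2 xB1'v3)
          rw [e2] at hcon; norm_num at hcon
    · -- c1 = 2
      have e1 : ρ1 = 1/3 := mesRho_unique hρ1 (rB2 x0B rfl rfl)
      subst e1
      replace h1 : mesPhase1 PB xC1 (insert 2 ∅) L1 xf := h1
      rcases L1 with _ | ⟨c2, L1⟩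
      · rcases hbr with ⟨hlen, -⟩ | ⟨-, hna, -⟩
        · simp at hlen
        · subst h1
          exact absurd (show mesAfford PB xC1 0 by
            rw [mesAfford, sB0]; norm_num [xC1v1, xC1v2]) (hna 0 (by decide))
      · obtain ⟨hne2, haff2, ρ2, hρ2, hmin2, h1⟩ := h1
        rcases hc4 c2 with rfl | rfl | rfl | rfl
        · have e2 : ρ2 = 11/30 := mesRho_unique hρ2 (rB0' xC1 xC1v1 xC1v2)
          subst e2
          replace h1 : mesPhase1 PB xC20 (insert 0 (insert 2 ∅)) L1 xf := h1
          rcases L1 with _ | ⟨c3, L1⟩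
          · subst h1
            rcases hbr with ⟨hlen, -⟩ | ⟨-, -, L2, h2, hlen, hW⟩
            · simp at hlen
            · have hL2 : L2.length = 1 := by simpa using hlen
              rcases L2 with _ | ⟨e, L2'⟩
              · simp at hL2
              · have hnil : L2' = [] := by simpa using hL2
                subst hnil
                have he : e = 1 := e_xC20 h2
                subst he
                rw [hW]; decide
          · exfalso
            obtain ⟨hne3, haff3, -⟩ := h1
            rcases hc4 c3 with rfl | rfl | rfl | rfl
            · exact hne3 (by decide)
            · exact (show ¬ mesAfford PB xC20 1 by
                rw [mesAfford, sB1]; norm_num [xC20v1, xC20v2]) haff3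
            · exact hne3 (by decide)
            · exact (show ¬ mesAfford PB xC20 3 by
                rw [mesAfford, sB3]; norm_num [xC20v3]) haff3
        · have e2 : ρ2 = 11/30 := mesRho_unique hρ2 (rB1' xC1 xC1v1 xC1v2)
          subst e2
          replace h1 : mesPhase1 PB xC21 (insert 1 (insert 2 ∅)) L1 xf := h1
          rcases L1 with _ | ⟨c3, L1⟩
          · subst h1
            rcases hbr with ⟨hlen, -⟩ | ⟨-, -, L2, h2, hlen, hW⟩
            · simp at hlen
            · have hL2 : L2.length = 1 := by simpa using hlen
              rcases L2 with _ | ⟨e, L2'⟩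
              · simp at hL2
              · have hnil : L2' = [] := by simpa using hL2
                subst hnil
                have he : e = 0 := e_xC21 h2
                subst he
                rw [hW]; decide
          · exfalso
            obtain ⟨hne3, haff3, -⟩ := h1
            rcases hc4 c3 with rfl | rfl | rfl | rfl
            · exact (show ¬ mesAfford PB xC21 0 by
                rw [mesAfford, sB0]; norm_num [xC21v1, xC21v2]) haff3
            · exact hne3 (by decide)
            · exact hne3 (by decide)
            · exact (show ¬ mesAfford PB xC21 3 by
                rw [mesAfford, sB3]; norm_num [xC21v3]) haff3
        · exact absurd (by decide) hne2
        · exact absurd haff2 (show ¬ mesAfford PB xC1 3 by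
            rw [mesAfford, sB3]; norm_num [xC1v3])
    · -- c1 = 3
      exfalso
      have e1 : ρ1 = 1/2 := mesRho_unique hρ1 (rB3 x0B rfl)
      have hcon := hmin1 0 (by decide) (show mesAfford PB x0B 0 by
        rw [mesAfford, sB0]; norm_num [x0B]) (1/3) (rB0 x0B rfl rfl)
      rw [e1] at hcon; norm_num at hcon

/-- The method of equal shares fails participation: there are a candidate set, a
committee size, a profile, and a voter who strictly benefits from abstaining (w.r.t.
Kelly's extension). -/
theorem mes_fails_participation :
    ∃ (m k : ℕ) (A : Multiset (Finset (Fin m))) (b : Finset (Fin m)),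
      1 ≤ k ∧ k < m ∧ validProfile A ∧ b ∈ A ∧
      KellyStrict b (mes (A.erase b) k) (mes A k) := by
  refine ⟨4, 3, PA, s2, by norm_num, by norm_num, ⟨by decide, by decide⟩, by decide, ?_⟩
  rw [show PA.erase s2 = PB from by decide]
  constructor
  · intro W hW W' _
    rw [revB W hW]
    calc (W' ∩ s2).card ≤ s2.card := Finset.card_le_card (Finset.inter_subset_right)
      _ ≤ (({0,1,2} : Finset (Fin 4)) ∩ s2).card := by decide
  · exact ⟨{0,1,2}, memB, {0,1,3}, memA, by decide⟩
end

section
/- Every sequential Thiele rule satisfies participation for unrepresented voters: for every Thiele scoring function s, the induced sequential Thiele rule f has the property that for all profiles A, committee sizes k, and voters i ∈ N_A for which some W ∈ f(A,k) has W ∩ A_i = ∅, it is not the case that f(A_{-i},k) ≻_i f(A,k). -/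
/-!
While the partial committee contains no candidate of voter `b`, adding `x` raises the
satisfaction of `b` by `s 1` if `x ∈ b` and by nothing otherwise. So a greedy run for `A`
avoiding `b` is also one for `A.erase b`, and if `b` profited from abstaining, every committee
of `seqThiele s A k` would miss `b` while one of `seqThiele s (A.erase b) k` meets it. But a
run for `A.erase b` that eventually picks a candidate of `b` can be replayed for `A`: at each
step either its choice is still greedy for `A` or some candidate of `b` is, and taking that
one and completing the run arbitrarily gives a committee for `A` meeting `b`.
-/

section SeqThiele

variable {C : Type*} [DecidableEq C] {s : ℕ → ℚ} {A : Multiset (Finset C)} {b P W : Finset C}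

def IsGreedyChoice (s : ℕ → ℚ) (A : Multiset (Finset C)) (P : Finset C) (x : C) : Prop :=
  x ∉ P ∧ ∀ y ∉ P, thieleScore s A (insert y P) ≤ thieleScore s A (insert x P)

theorem seqThieleValid_cons {c : C} {L : List C} :
    seqThieleValid s A P (c :: L) ↔
      IsGreedyChoice s A P c ∧ seqThieleValid s A (insert c P) L :=
  and_assoc.symm

theorem thieleScore_eq_erase_add (hb : b ∈ A) (W : Finset C) :
    thieleScore s A W = thieleScore s (A.erase b) W + s (b ∩ W).card := by
  rw [thieleScore, thieleScore, ← Multiset.sum_map_erase hb, add_comm]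

theorem thieleScore_insert_eq_erase_add (h0 : s 0 = 0) (hb : b ∈ A) (hbP : Disjoint b P)
    (x : C) :
    thieleScore s A (insert x P) =
      thieleScore s (A.erase b) (insert x P) + if x ∈ b then s 1 else 0 := by
  rw [thieleScore_eq_erase_add hb]
  have hbP' : b ∩ P = ∅ := Finset.disjoint_iff_inter_eq_empty.mp hbP
  split_ifs with hx
  · rw [Finset.inter_insert_of_mem hx, hbP', insert_empty_eq, Finset.card_singleton]
  · rw [Finset.inter_insert_of_notMem hx, hbP', Finset.card_empty, h0]

theorem IsGreedyChoice.erase (h0 : s 0 = 0) (hs1 : 0 ≤ s 1) (hb : b ∈ A)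
    (hbP : Disjoint b P) {x : C} (hx : IsGreedyChoice s A P x) (hxb : x ∉ b) :
    IsGreedyChoice s (A.erase b) P x := by
  refine ⟨hx.1, fun y hy => ?_⟩
  have hyx := hx.2 y hy
  rw [thieleScore_insert_eq_erase_add h0 hb hbP, thieleScore_insert_eq_erase_add h0 hb hbP,
    if_neg hxb] at hyx
  split_ifs at hyx <;> linarith

theorem exists_isGreedyChoice [Fintype C] (s : ℕ → ℚ) (A : Multiset (Finset C))
    (hP : P.card < Fintype.card C) : ∃ x, IsGreedyChoice s A P x := by
  have hPc : Pᶜ.Nonempty := by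
    rw [← Finset.card_pos, Finset.card_compl]
    omega
  obtain ⟨x, hxP, hx⟩ := Finset.exists_max_image Pᶜ (fun y => thieleScore s A (insert y P)) hPc
  exact ⟨x, Finset.mem_compl.mp hxP, fun y hy => hx y (Finset.mem_compl.mpr hy)⟩

theorem exists_seqThieleValid [Fintype C] (s : ℕ → ℚ) (A : Multiset (Finset C)) :
    ∀ (n : ℕ) (P : Finset C), P.card + n ≤ Fintype.card C →
      ∃ L : List C, seqThieleValid s A P L ∧ L.length = n
  | 0, _, _ => ⟨[], trivial, rfl⟩
  | n + 1, P, hP => by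
    obtain ⟨x, hx⟩ := exists_isGreedyChoice s A (P := P) (by omega)
    obtain ⟨L, hL, hlen⟩ := exists_seqThieleValid s A n (insert x P)
      (by rw [Finset.card_insert_of_notMem hx.1]; omega)
    exact ⟨x :: L, seqThieleValid_cons.mpr ⟨hx, hL⟩, by simp [hlen]⟩

theorem IsGreedyChoice.exists_mem_or_of_erase [Fintype C] (h0 : s 0 = 0) (hs1 : 0 ≤ s 1)
    (hb : b ∈ A) (hbP : Disjoint b P) {c : C} (hc : IsGreedyChoice s (A.erase b) P c) :
    (∃ x ∈ b, IsGreedyChoice s A P x) ∨ (c ∉ b ∧ IsGreedyChoice s A P c) := by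
  have hscore := thieleScore_insert_eq_erase_add h0 hb hbP
  obtain ⟨x, hx⟩ := exists_isGreedyChoice s A (Finset.card_lt_univ_of_notMem hc.1)
  by_cases hxb : x ∈ b
  · exact .inl ⟨x, hxb, hx⟩
  by_cases hcb : c ∈ b
  · refine .inl ⟨c, hcb, hc.1, fun y hy => ?_⟩
    have hyc := hc.2 y hy
    rw [hscore, hscore, if_pos hcb]
    split_ifs <;> linarith
  · refine .inr ⟨hcb, hc.1, fun y hy => ?_⟩
    calc thieleScore s A (insert y P) ≤ thieleScore s A (insert x P) := hx.2 y hy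
      _ = thieleScore s (A.erase b) (insert x P) := by rw [hscore, if_neg hxb, add_zero]
      _ ≤ thieleScore s (A.erase b) (insert c P) := hc.2 x hx.1
      _ = thieleScore s A (insert c P) := by rw [hscore, if_neg hcb, add_zero]

theorem seqThieleValid.card_add_length_le [Fintype C] :
    ∀ {P : Finset C} {L : List C}, seqThieleValid s A P L → P.card + L.length ≤ Fintype.card C
  | P, [], _ => by simpa using P.card_le_univ
  | _, _ :: _, ⟨hcP, _, hv⟩ => by
    have := hv.card_add_length_le
    rw [Finset.card_insert_of_notMem hcP] at this
    simp only [List.length_cons]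
    omega

theorem seqThieleValid.erase (h0 : s 0 = 0) (hs1 : 0 ≤ s 1) (hb : b ∈ A) :
    ∀ {P : Finset C} {L : List C}, seqThieleValid s A P L → Disjoint b P →
      (∀ c ∈ L, c ∉ b) → seqThieleValid s (A.erase b) P L
  | _, [], _, _, _ => trivial
  | _, c :: _, hv, hbP, hLb => by
    rw [seqThieleValid_cons] at hv ⊢
    have hcb := hLb c List.mem_cons_self
    exact ⟨hv.1.erase h0 hs1 hb hbP hcb,
      hv.2.erase h0 hs1 hb (Finset.disjoint_insert_right.mpr ⟨hcb, hbP⟩)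
        fun d hd => hLb d (List.mem_cons_of_mem c hd)⟩

theorem seqThieleValid.exists_of_erase [Fintype C] (h0 : s 0 = 0) (hs1 : 0 ≤ s 1)
    (hb : b ∈ A) :
    ∀ {P : Finset C} {L' : List C}, seqThieleValid s (A.erase b) P L' → Disjoint b P →
      (∃ c ∈ L', c ∈ b) →
        ∃ L : List C, seqThieleValid s A P L ∧ L.length = L'.length ∧ ∃ c ∈ L, c ∈ b
  | _, [], _, _, ⟨_, hc, _⟩ => absurd hc List.not_mem_nil
  | P, c :: L', hv, hbP, hmeet => by
    rw [seqThieleValid_cons] at hv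
    rcases hv.1.exists_mem_or_of_erase h0 hs1 hb hbP with ⟨x, hxb, hx⟩ | ⟨hcb, hc⟩
    · have hcard := hv.2.card_add_length_le
      rw [Finset.card_insert_of_notMem hv.1.1] at hcard
      obtain ⟨L, hL, hlen⟩ := exists_seqThieleValid s A L'.length (insert x P)
        (by rw [Finset.card_insert_of_notMem hx.1]; exact hcard)
      exact ⟨x :: L, seqThieleValid_cons.mpr ⟨hx, hL⟩, by simp [hlen], x,
        List.mem_cons_self, hxb⟩
    · have hmeet' : ∃ d ∈ L', d ∈ b := by
        obtain ⟨d, hd, hdb⟩ := hmeet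
        exact ⟨d, (List.mem_cons.mp hd).resolve_left (by rintro rfl; exact hcb hdb), hdb⟩
      obtain ⟨L, hL, hlen, d, hd, hdb⟩ :=
        hv.2.exists_of_erase h0 hs1 hb (Finset.disjoint_insert_right.mpr ⟨hcb, hbP⟩) hmeet'
      exact ⟨c :: L, seqThieleValid_cons.mpr ⟨hc, hL⟩, by simp [hlen], d,
        List.mem_cons_of_mem c hd, hdb⟩

theorem mem_seqThiele_erase (h0 : s 0 = 0) (hs1 : 0 ≤ s 1) (hb : b ∈ A) {k : ℕ}
    (hW : W ∈ seqThiele s A k) (hWb : Disjoint W b) : W ∈ seqThiele s (A.erase b) k := by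
  obtain ⟨L, rfl, hlen, hv⟩ := hW
  exact ⟨L, rfl, hlen, hv.erase h0 hs1 hb (Finset.disjoint_empty_right b)
    fun c hc => Finset.disjoint_left.mp hWb (List.mem_toFinset.mpr hc)⟩

theorem exists_mem_seqThiele_not_disjoint_of_erase [Fintype C] (h0 : s 0 = 0)
    (hs1 : 0 ≤ s 1) (hb : b ∈ A) {k : ℕ} (hW : W ∈ seqThiele s (A.erase b) k)
    (hWb : ¬Disjoint W b) : ∃ W' ∈ seqThiele s A k, ¬Disjoint W' b := by
  obtain ⟨L', rfl, hlen, hv⟩ := hW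
  obtain ⟨c, hcL', hcb⟩ := Finset.not_disjoint_iff.mp hWb
  obtain ⟨L, hL, hlen', d, hdL, hdb⟩ := hv.exists_of_erase h0 hs1 hb
    (Finset.disjoint_empty_right b) ⟨c, List.mem_toFinset.mp hcL', hcb⟩
  exact ⟨L.toFinset, ⟨L, rfl, hlen'.trans hlen, hL⟩,
    Finset.not_disjoint_iff.mpr ⟨d, List.mem_toFinset.mpr hdL, hdb⟩⟩

end SeqThiele

theorem seqThiele_participation_unrepresented_general
    {C : Type*} [DecidableEq C] [Fintype C]
    (s : ℕ → ℚ) (h0 : s 0 = 0)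
    (hmono : ∀ x : ℕ, s x ≤ s (x + 1))
    (A : Multiset (Finset C))
    (k : ℕ)
    (b : Finset C) (hb : b ∈ A)
    (hunrep : ∃ W ∈ seqThiele s A k, W ∩ b = ∅) :
    ¬ KellyStrict b (seqThiele s (A.erase b) k) (seqThiele s A k) := by
  have hs1 : 0 ≤ s 1 := h0 ▸ hmono 0
  rintro ⟨hweak, W, hW, W', -, hlt⟩
  obtain ⟨W₀, hW₀, hW₀b⟩ := hunrep
  have hWb : ¬Disjoint W b := by
    rw [Finset.disjoint_iff_inter_eq_empty, ← Finset.card_eq_zero]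
    omega
  obtain ⟨W₁, hW₁, hW₁b⟩ := exists_mem_seqThiele_not_disjoint_of_erase h0 hs1 hb hW hWb
  have hle := hweak W₀
    (mem_seqThiele_erase h0 hs1 hb hW₀ (Finset.disjoint_iff_inter_eq_empty.mpr hW₀b)) W₁ hW₁
  rw [hW₀b, Finset.card_empty, Nat.le_zero, Finset.card_eq_zero,
    ← Finset.disjoint_iff_inter_eq_empty] at hle
  exact hW₁b hle

/-- Every sequential Thiele rule satisfies participation for unrepresented voters:
a voter who approves no candidate of some winning committee cannot strictly benefit
from abstaining (w.r.t. Kelly's extension). -/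
theorem seqThiele_participation_unrepresented
    {C : Type*} [DecidableEq C] [Fintype C] (hm : 1 < Fintype.card C)
    (s : ℕ → ℚ) (h0 : s 0 = 0) (h1 : 0 < s 1)
    (hmono : ∀ x : ℕ, s x ≤ s (x + 1))
    (hconcave : ∀ x : ℕ, s (x + 2) - s (x + 1) ≤ s (x + 1) - s x)
    (A : Multiset (Finset C)) (hA : validProfile A)
    (k : ℕ) (hk1 : 1 ≤ k) (hk2 : k < Fintype.card C)
    (b : Finset C) (hb : b ∈ A)
    (hunrep : ∃ W ∈ seqThiele s A k, W ∩ b = ∅) :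
    ¬ KellyStrict b (seqThiele s (A.erase b) k) (seqThiele s A k) :=
  seqThiele_participation_unrepresented_general s h0 hmono A k b hb hunrep
end

section
/- The method of equal shares violates participation for unrepresented voters: there exist a candidate set C, a committee size k, an approval profile A, and a voter i ∈ N_A such that every committee W ∈ f(A,k) satisfies W ∩ A_i = ∅ and yet f(A_{-i},k) ≻_i f(A,k), where f is MES. Concretely, this holds for k = 5 and the profile with ballots 20×{x_1,x_2,x_3}, 10×{y_1,y_2}, 10×{y_1,y_2,z}, 9×{z,c}, 2×{c}, with i one of the two voters approving only c: candidate c is in no winning committee for A, but in every winning committee for A_{-i}. -/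
/-- The concrete counterexample profile on the candidate set
`{x₁,x₂,x₃,y₁,y₂,z,c} = {0,1,2,3,4,5,6}`:
ballots `20×{x₁,x₂,x₃}`, `10×{y₁,y₂}`, `10×{y₁,y₂,z}`, `9×{z,c}`, `2×{c}`. -/
def counterProfile : Multiset (Finset (Fin 7)) :=
  Multiset.replicate 20 ({0, 1, 2} : Finset (Fin 7)) +
  Multiset.replicate 10 ({3, 4} : Finset (Fin 7)) +
  Multiset.replicate 10 ({3, 4, 5} : Finset (Fin 7)) +
  Multiset.replicate 9 ({5, 6} : Finset (Fin 7)) +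
  Multiset.replicate 2 ({6} : Finset (Fin 7))

/-!
The voters of both profiles fall into five ballot types, so a budget function is determined by
five numbers.

With all 51 voters, each voter holds `5/51`. MES first buys one `xᵢ` and one `yᵢ` at `1/20`
per voter; after that the remaining `xᵢ`, `yᵢ` are unaffordable, and `z` costs `53/918` per
voter (the `{y₁,y₂,z}` voters have only `49/1020` left), which beats `c`, whose price is at
least `1/11`. Then the supporters of `c` hold `9 · 37/918 + 2 · 5/51 < 1`, so Phase 1 stops, and
in the seqPhragmén completion an `xᵢ` and then a `yᵢ` are bought before `c`.

Without voter `i`, each of the 50 voters holds `1/10`. The `xᵢ` and `yᵢ` cost `1/20` per voter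
while `z` costs at least `1/19`, so Phase 1 buys two `xᵢ` and two `yᵢ`, which exhausts the
`{y₁,y₂,z}` voters. At that point `z` is unaffordable, but the ten supporters of `c` still hold
exactly `1`, so `c` is elected.
-/

section General

variable {C : Type*} [DecidableEq C] {A : Multiset (Finset C)} {x : Finset C → ℚ} {c d : C}
  {ρ ρ' : ℚ}

theorem mesRho.unique (h : mesRho A x c ρ) (h' : mesRho A x c ρ') : ρ = ρ' :=
  le_antisymm (h.2 _ h'.1) (h'.2 _ h.1)

theorem mesRho.one_le_card_mul (h : mesRho A x c ρ) :
    1 ≤ (Multiset.card (A.filter fun b => c ∈ b) : ℚ) * ρ :=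
  calc (1 : ℚ) = ((A.filter fun b => c ∈ b).map fun b => min ρ (x b)).sum := h.1.symm
    _ ≤ ((A.filter fun b => c ∈ b).map fun _ => ρ).sum :=
      Multiset.sum_map_le_sum_map _ _ fun _ _ => min_le_left _ _
    _ = _ := by simp

theorem mesRho.le_of_card_mul_le_one (h : mesRho A x c ρ')
    (hρ : (Multiset.card (A.filter fun b => c ∈ b) : ℚ) * ρ ≤ 1) : ρ ≤ ρ' := by
  have h1 := h.one_le_card_mul
  have hpos : (0 : ℚ) < Multiset.card (A.filter fun b => c ∈ b) :=
    Nat.cast_pos.2 (Nat.pos_of_ne_zero fun h0 => by norm_num [h0] at h1)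
  exact le_of_mul_le_mul_left (by linarith) hpos

theorem mesRho_of_sum_eq_one (h : ((A.filter fun b => c ∈ b).map fun b => min ρ (x b)).sum = 1)
    (hb : ∃ b ∈ A.filter (fun b => c ∈ b), ρ ≤ x b) : mesRho A x c ρ := by
  refine ⟨h, fun ρ' h' => le_of_not_gt fun hlt => ?_⟩
  obtain ⟨b, hbA, hρb⟩ := hb
  have : ((A.filter fun b => c ∈ b).map fun b => min ρ' (x b)).sum <
      ((A.filter fun b => c ∈ b).map fun b => min ρ (x b)).sum :=
    Multiset.sum_lt_sum (fun _ _ => min_le_min_right _ hlt.le)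
      ⟨b, hbA, by rw [min_eq_left hρb]; exact min_lt_of_left_lt hlt⟩
  linarith

theorem mesPhase1.nodup {x : Finset C → ℚ} {E : Finset C} {L : List C} {xf : Finset C → ℚ}
    (h : mesPhase1 A x E L xf) : L.Nodup := by
  suffices ∀ (L : List C) x E, mesPhase1 A x E L xf → L.Nodup ∧ ∀ c ∈ L, c ∉ E from
    (this L x E h).1
  intro L
  induction L with
  | nil => simp
  | cons c L ih =>
    rintro x E ⟨hcE, -, ρ, -, -, hrest⟩
    obtain ⟨hnd, hnotin⟩ := ih _ _ hrest
    refine ⟨List.nodup_cons.2 ⟨fun hc => hnotin c hc (Finset.mem_insert_self _ _), hnd⟩, ?_⟩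
    rintro d (_ | ⟨_, hd⟩)
    · exact hcE
    · exact fun hdE => hnotin d hd (Finset.mem_insert_of_mem hdE)

theorem mesPhase1_nil {x : Finset C → ℚ} {E : Finset C} : mesPhase1 A x E [] x := rfl

theorem mesPhase1.invariant (Inv : (Finset C → ℚ) → Finset C → Prop)
    (step : ∀ x E c ρ, Inv x E → c ∉ E → mesAfford A x c → mesRho A x c ρ →
      (∀ d, d ∉ E → mesAfford A x d → ∀ ρ', mesRho A x d ρ' → ρ ≤ ρ') →
      Inv (fun b => if c ∈ b then x b - min ρ (x b) else x b) (insert c E))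
    {x : Finset C → ℚ} {E : Finset C} {L : List C} {xf : Finset C → ℚ}
    (h : mesPhase1 A x E L xf) (hInv : Inv x E) : Inv xf (E ∪ L.toFinset) := by
  induction L generalizing x E with
  | nil => simpa [show xf = x from h] using hInv
  | cons c L ih =>
    obtain ⟨hcE, hc, ρ, hρ, hmin, hrest⟩ := h
    have := ih hrest (step x E c ρ hInv hcE hc hρ hmin)
    simpa [Finset.insert_union, Finset.union_insert] using this

end General

theorem Finset.exists_mem_notMem_of_card_inter_lt {α : Type*} [DecidableEq α] {E S : Finset α}
    (h : (E ∩ S).card < S.card) : ∃ e ∈ S, e ∉ E := by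
  obtain ⟨e, heS, he⟩ := Finset.exists_mem_notMem_of_card_lt_card h
  exact ⟨e, heS, fun heE => he (Finset.mem_inter.2 ⟨heE, heS⟩)⟩

theorem Finset.card_insert_inter_of_mem {α : Type*} [DecidableEq α] {s t : Finset α} {a : α}
    (hat : a ∈ t) (has : a ∉ s) : (insert a s ∩ t).card = (s ∩ t).card + 1 := by
  rw [Finset.insert_inter_of_mem hat,
    Finset.card_insert_of_notMem fun h => has (Finset.mem_inter.1 h).1]

theorem Multiset.filter_replicate {α : Type*} (p : α → Prop) [DecidablePred p] (k : ℕ) (a : α) :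
    (Multiset.replicate k a).filter p = if p a then Multiset.replicate k a else 0 := by
  split_ifs with hp
  · exact Multiset.filter_eq_self.2 fun b hb => Multiset.eq_of_mem_replicate hb ▸ hp
  · exact Multiset.filter_eq_nil.2 fun b hb => Multiset.eq_of_mem_replicate hb ▸ hp

namespace MESExample

def ballotX : Finset (Fin 7) := {0, 1, 2}
def ballotY : Finset (Fin 7) := {3, 4}
def ballotYZ : Finset (Fin 7) := {3, 4, 5}
def ballotZC : Finset (Fin 7) := {5, 6}
def ballotC : Finset (Fin 7) := {6}

def profile (n : ℕ) : Multiset (Finset (Fin 7)) :=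
  Multiset.replicate 20 ballotX + Multiset.replicate 10 ballotY +
  Multiset.replicate 10 ballotYZ + Multiset.replicate 9 ballotZC + Multiset.replicate n ballotC

theorem counterProfile_eq : counterProfile = profile 2 := rfl

theorem counterProfile_erase : counterProfile.erase {6} = profile 1 := by decide

theorem validProfile_profile (n : ℕ) : validProfile (profile n) := by
  refine ⟨by simp [profile], fun b hb => ?_⟩
  simp only [profile, Multiset.mem_add, Multiset.mem_replicate] at hb
  rcases hb with (((⟨-, rfl⟩ | ⟨-, rfl⟩) | ⟨-, rfl⟩) | ⟨-, rfl⟩) | ⟨-, rfl⟩ <;> decide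

theorem card_profile (n : ℕ) : Multiset.card (profile n) = 49 + n := by
  simp [profile]; ring

theorem candidate_cases (c : Fin 7) : c ∈ ballotX ∨ c ∈ ballotY ∨ c = 5 ∨ c = 6 := by
  revert c; decide

theorem notMem_of_mem_ballotX : ∀ c ∈ ballotX,
    c ∉ ballotY ∧ c ∉ ballotYZ ∧ c ∉ ballotZC ∧ c ∉ ballotC ∧ c ≠ 5 ∧ c ≠ 6 := by decide

theorem notMem_of_mem_ballotY : ∀ c ∈ ballotY,
    c ∉ ballotX ∧ c ∈ ballotYZ ∧ c ∉ ballotZC ∧ c ∉ ballotC ∧ c ≠ 5 ∧ c ≠ 6 := by decide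

structure HasBudgets (x : Finset (Fin 7) → ℚ) (a b c d e : ℚ) : Prop where
  onX : x ballotX = a
  onY : x ballotY = b
  onYZ : x ballotYZ = c
  onZC : x ballotZC = d
  onC : x ballotC = e

namespace HasBudgets

variable {x : Finset (Fin 7) → ℚ} {a b c d e a' b' c' d' e' ρ t : ℚ} {k : Fin 7}

theorem pay_of_mem_ballotX (h : HasBudgets x a b c d e) (hk : k ∈ ballotX)
    (ha : a - min ρ a = a') :
    HasBudgets (fun B => if k ∈ B then x B - min ρ (x B) else x B) a' b c d e := by
  obtain ⟨hY, hYZ, hZC, hC, -⟩ := notMem_of_mem_ballotX k hk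
  exact ⟨by simp [hk, h.onX, ha], by simp [hY, h.onY], by simp [hYZ, h.onYZ],
    by simp [hZC, h.onZC], by simp [hC, h.onC]⟩

theorem pay_of_mem_ballotY (h : HasBudgets x a b c d e) (hk : k ∈ ballotY)
    (hb : b - min ρ b = b') (hc : c - min ρ c = c') :
    HasBudgets (fun B => if k ∈ B then x B - min ρ (x B) else x B) a b' c' d e := by
  obtain ⟨hX, hYZ, hZC, hC, -⟩ := notMem_of_mem_ballotY k hk
  exact ⟨by simp [hX, h.onX], by simp [hk, h.onY, hb], by simp [hYZ, h.onYZ, hc],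
    by simp [hZC, h.onZC], by simp [hC, h.onC]⟩

theorem pay_five (h : HasBudgets x a b c d e) (hc : c - min ρ c = c') (hd : d - min ρ d = d') :
    HasBudgets (fun B => if (5 : Fin 7) ∈ B then x B - min ρ (x B) else x B) a b c' d' e :=
  ⟨by simp [ballotX, h.onX.symm], by simp [ballotY, h.onY.symm],
    by simp [ballotYZ, h.onYZ.symm, ← hc], by simp [ballotZC, h.onZC.symm, ← hd],
    by simp [ballotC, h.onC.symm]⟩

theorem reset_of_mem_ballotX (h : HasBudgets x a b c d e) (hk : k ∈ ballotX)
    (hb : b + t = b') (hc : c + t = c') (hd : d + t = d') (he : e + t = e') :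
    HasBudgets (fun B => if k ∈ B then 0 else x B + t) 0 b' c' d' e' := by
  obtain ⟨hY, hYZ, hZC, hC, -⟩ := notMem_of_mem_ballotX k hk
  exact ⟨by simp [hk], by simp [hY, h.onY, hb], by simp [hYZ, h.onYZ, hc],
    by simp [hZC, h.onZC, hd], by simp [hC, h.onC, he]⟩

end HasBudgets

variable {n : ℕ} {c : Fin 7}

theorem sum_map_filter_profile (f : Finset (Fin 7) → ℚ) :
    (((profile n).filter fun b => c ∈ b).map f).sum =
      (if c ∈ ballotX then 20 * f ballotX else 0) + (if c ∈ ballotY then 10 * f ballotY else 0) +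
      (if c ∈ ballotYZ then 10 * f ballotYZ else 0) +
      (if c ∈ ballotZC then 9 * f ballotZC else 0) +
      (if c ∈ ballotC then n * f ballotC else 0) := by
  simp only [profile, Multiset.filter_add, Multiset.filter_replicate, Multiset.map_add,
    Multiset.sum_add, apply_ite (Multiset.map f), apply_ite Multiset.sum, Multiset.map_replicate,
    Multiset.sum_replicate, Multiset.map_zero, Multiset.sum_zero, nsmul_eq_mul]
  push_cast
  rfl

theorem sum_map_filter_of_mem_ballotX (hc : c ∈ ballotX) (f : Finset (Fin 7) → ℚ) :
    (((profile n).filter fun b => c ∈ b).map f).sum = 20 * f ballotX := by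
  obtain ⟨hY, hYZ, hZC, hC, -⟩ := notMem_of_mem_ballotX c hc
  simp [sum_map_filter_profile, hc, hY, hYZ, hZC, hC]

theorem sum_map_filter_of_mem_ballotY (hc : c ∈ ballotY) (f : Finset (Fin 7) → ℚ) :
    (((profile n).filter fun b => c ∈ b).map f).sum = 10 * f ballotY + 10 * f ballotYZ := by
  obtain ⟨hX, hYZ, hZC, hC, -⟩ := notMem_of_mem_ballotY c hc
  simp [sum_map_filter_profile, hc, hX, hYZ, hZC, hC]

theorem sum_map_filter_five (f : Finset (Fin 7) → ℚ) :
    (((profile n).filter fun b => (5 : Fin 7) ∈ b).map f).sum =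
      10 * f ballotYZ + 9 * f ballotZC := by
  simp [sum_map_filter_profile, ballotX, ballotY, ballotYZ, ballotZC, ballotC]

theorem sum_map_filter_six (f : Finset (Fin 7) → ℚ) :
    (((profile n).filter fun b => (6 : Fin 7) ∈ b).map f).sum =
      9 * f ballotZC + n * f ballotC := by
  simp [sum_map_filter_profile, ballotX, ballotY, ballotYZ, ballotZC, ballotC]

theorem card_filter_of_mem_ballotX (hc : c ∈ ballotX) :
    (Multiset.card ((profile n).filter fun b => c ∈ b) : ℚ) = 20 := by
  simpa using sum_map_filter_of_mem_ballotX (n := n) hc fun _ => (1 : ℚ)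

theorem card_filter_of_mem_ballotY (hc : c ∈ ballotY) :
    (Multiset.card ((profile n).filter fun b => c ∈ b) : ℚ) = 20 := by
  have h := sum_map_filter_of_mem_ballotY (n := n) hc fun _ => (1 : ℚ)
  simp at h; linarith

theorem card_filter_five :
    (Multiset.card ((profile n).filter fun b => (5 : Fin 7) ∈ b) : ℚ) = 19 := by
  have h := sum_map_filter_five (n := n) fun _ => (1 : ℚ)
  simp at h; linarith

theorem card_filter_six :
    (Multiset.card ((profile n).filter fun b => (6 : Fin 7) ∈ b) : ℚ) = 9 + n := by
  simpa using sum_map_filter_six (n := n) fun _ => (1 : ℚ)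

theorem card_filter_le (hn : n ≤ 11) (c : Fin 7) :
    (Multiset.card ((profile n).filter fun b => c ∈ b) : ℚ) ≤ 20 := by
  rcases candidate_cases c with hc | hc | rfl | rfl
  · rw [card_filter_of_mem_ballotX hc]
  · rw [card_filter_of_mem_ballotY hc]
  · rw [card_filter_five]; norm_num
  · rw [card_filter_six]; have : (n : ℚ) ≤ 11 := by exact_mod_cast hn
    linarith

theorem filter_profile_ne_zero (c : Fin 7) : ((profile n).filter fun b => c ∈ b) ≠ 0 := by
  have : (0 : ℚ) < Multiset.card ((profile n).filter fun b => c ∈ b) := by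
    rcases candidate_cases c with hc | hc | rfl | rfl
    · rw [card_filter_of_mem_ballotX hc]; norm_num
    · rw [card_filter_of_mem_ballotY hc]; norm_num
    · rw [card_filter_five]; norm_num
    · rw [card_filter_six]; positivity
  exact Multiset.card_pos.1 (by exact_mod_cast this)

theorem buyTime_of_mem_ballotX (hc : c ∈ ballotX) (x : Finset (Fin 7) → ℚ) :
    buyTime (profile n) x c = max 0 ((1 - 20 * x ballotX) / 20) := by
  rw [buyTime, supBudget, sum_map_filter_of_mem_ballotX hc, card_filter_of_mem_ballotX hc]

theorem buyTime_of_mem_ballotY (hc : c ∈ ballotY) (x : Finset (Fin 7) → ℚ) :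
    buyTime (profile n) x c = max 0 ((1 - (10 * x ballotY + 10 * x ballotYZ)) / 20) := by
  rw [buyTime, supBudget, sum_map_filter_of_mem_ballotY hc, card_filter_of_mem_ballotY hc]

theorem buyTime_five (x : Finset (Fin 7) → ℚ) :
    buyTime (profile n) x 5 = max 0 ((1 - (10 * x ballotYZ + 9 * x ballotZC)) / 19) := by
  rw [buyTime, supBudget, sum_map_filter_five, card_filter_five]

theorem buyTime_six (x : Finset (Fin 7) → ℚ) :
    buyTime (profile n) x 6 = max 0 ((1 - (9 * x ballotZC + n * x ballotC)) / (9 + n)) := by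
  rw [buyTime, supBudget, sum_map_filter_six, card_filter_six]

theorem mesRho_of_mem_ballotX {x : Finset (Fin 7) → ℚ} (hc : c ∈ ballotX)
    (hx : 1 / 20 ≤ x ballotX) : mesRho (profile n) x c (1 / 20) :=
  mesRho_of_sum_eq_one
    (by rw [sum_map_filter_of_mem_ballotX hc, min_eq_left hx]; norm_num)
    ⟨ballotX, Multiset.mem_filter.2 ⟨by simp [profile], hc⟩, hx⟩

theorem mesRho_of_mem_ballotY {x : Finset (Fin 7) → ℚ} (hc : c ∈ ballotY)
    (hY : 1 / 20 ≤ x ballotY) (hYZ : 1 / 20 ≤ x ballotYZ) : mesRho (profile n) x c (1 / 20) :=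
  mesRho_of_sum_eq_one
    (by rw [sum_map_filter_of_mem_ballotY hc, min_eq_left hY, min_eq_left hYZ]; norm_num)
    ⟨ballotY, Multiset.mem_filter.2 ⟨by simp [profile], hc⟩, hY⟩

-- No candidate has more than 20 supporters, so no price is below `1/20`.
theorem mesPhase1_cons_of_mem_ballotX {x xf : Finset (Fin 7) → ℚ} {E : Finset (Fin 7)}
    {L : List (Fin 7)} {a b c' d e : ℚ} (hn : n ≤ 11) (hx : HasBudgets x a b c' d e)
    (ha : 1 / 20 ≤ a) (hc : c ∈ ballotX) (hcE : c ∉ E)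
    (h : mesPhase1 (profile n) (fun b => if c ∈ b then x b - min (1 / 20) (x b) else x b)
      (insert c E) L xf) :
    mesPhase1 (profile n) x E (c :: L) xf :=
  ⟨hcE, by rw [mesAfford, supBudget, sum_map_filter_of_mem_ballotX hc, hx.onX]; linarith, 1 / 20,
    mesRho_of_mem_ballotX hc (hx.onX ▸ ha),
    fun d _ _ _ hd => hd.le_of_card_mul_le_one (by linarith [card_filter_le hn d]), h⟩

theorem mesPhase1_cons_of_mem_ballotY {x xf : Finset (Fin 7) → ℚ} {E : Finset (Fin 7)}
    {L : List (Fin 7)} {a b c' d e : ℚ} (hn : n ≤ 11) (hx : HasBudgets x a b c' d e)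
    (hb : 1 / 20 ≤ b) (hc' : 1 / 20 ≤ c') (hc : c ∈ ballotY) (hcE : c ∉ E)
    (h : mesPhase1 (profile n) (fun b => if c ∈ b then x b - min (1 / 20) (x b) else x b)
      (insert c E) L xf) :
    mesPhase1 (profile n) x E (c :: L) xf :=
  ⟨hcE, by rw [mesAfford, supBudget, sum_map_filter_of_mem_ballotY hc, hx.onY, hx.onYZ]; linarith,
    1 / 20, mesRho_of_mem_ballotY hc (hx.onY ▸ hb) (hx.onYZ ▸ hc'),
    fun d _ _ _ hd => hd.le_of_card_mul_le_one (by linarith [card_filter_le hn d]), h⟩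

theorem le_one_div_twenty_of_ballotX_available {x : Finset (Fin 7) → ℚ} {E : Finset (Fin 7)}
    {ρ : ℚ} (hE : (E ∩ ballotX).card < 3) (hx : 1 / 20 ≤ x ballotX)
    (hmin : ∀ d, d ∉ E → mesAfford (profile n) x d → ∀ ρ', mesRho (profile n) x d ρ' → ρ ≤ ρ') :
    ρ ≤ 1 / 20 := by
  obtain ⟨d, hd, hdE⟩ := Finset.exists_mem_notMem_of_card_inter_lt (E := E) (S := ballotX) hE
  exact hmin d hdE (by rw [mesAfford, supBudget, sum_map_filter_of_mem_ballotX hd]; linarith) _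
    (mesRho_of_mem_ballotX hd hx)

theorem le_one_div_twenty_of_ballotY_available {x : Finset (Fin 7) → ℚ} {E : Finset (Fin 7)}
    {ρ : ℚ} (hE : (E ∩ ballotY).card < 2) (hY : 1 / 20 ≤ x ballotY) (hYZ : 1 / 20 ≤ x ballotYZ)
    (hmin : ∀ d, d ∉ E → mesAfford (profile n) x d → ∀ ρ', mesRho (profile n) x d ρ' → ρ ≤ ρ') :
    ρ ≤ 1 / 20 := by
  obtain ⟨d, hd, hdE⟩ := Finset.exists_mem_notMem_of_card_inter_lt (E := E) (S := ballotY) hE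
  exact hmin d hdE (by rw [mesAfford, supBudget, sum_map_filter_of_mem_ballotY hd]; linarith) _
    (mesRho_of_mem_ballotY hd hY hYZ)

def Profile1Invariant (x : Finset (Fin 7) → ℚ) (E : Finset (Fin 7)) : Prop :=
  6 ∈ E ∨ ∃ i j : ℕ, i ≤ 2 ∧ j ≤ 2 ∧
    HasBudgets x (1 / 10 - i / 20) (1 / 10 - j / 20) (1 / 10 - j / 20) (1 / 10) (1 / 10) ∧
    (E ∩ ballotX).card = i ∧ (E ∩ ballotY).card = j ∧ E.card = i + j

theorem profile1Invariant_step (x : Finset (Fin 7) → ℚ) (E : Finset (Fin 7)) (c : Fin 7) (ρ : ℚ)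
    (hR : Profile1Invariant x E) (hcE : c ∉ E) (hc : mesAfford (profile 1) x c)
    (hρ : mesRho (profile 1) x c ρ)
    (hmin : ∀ d, d ∉ E → mesAfford (profile 1) x d → ∀ ρ', mesRho (profile 1) x d ρ' → ρ ≤ ρ') :
    Profile1Invariant (fun b => if c ∈ b then x b - min ρ (x b) else x b) (insert c E) := by
  rcases hR with h6 | ⟨i, j, hi, hj, hx, hEX, hEY, hE⟩
  · exact Or.inl (Finset.mem_insert_of_mem h6)
  have hcard : (insert c E).card = E.card + 1 := Finset.card_insert_of_notMem hcE
  rcases candidate_cases c with hcX | hcY | rfl | rfl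
  · have hi1 : (i : ℚ) ≤ 1 := by
      rw [mesAfford, supBudget, sum_map_filter_of_mem_ballotX hcX, hx.onX] at hc; linarith
    have hb : (1 : ℚ) / 20 ≤ 1 / 10 - i / 20 := by linarith
    obtain rfl := hρ.unique (mesRho_of_mem_ballotX hcX (hx.onX ▸ hb))
    exact Or.inr ⟨i + 1, j, by exact_mod_cast (by linarith : (i : ℚ) + 1 ≤ 2), hj,
      hx.pay_of_mem_ballotX hcX (by rw [min_eq_left hb]; push_cast; ring),
      by rw [Finset.card_insert_inter_of_mem hcX hcE, hEX],
      by rw [Finset.insert_inter_of_notMem (notMem_of_mem_ballotX c hcX).1, hEY], by omega⟩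
  · have hj1 : (j : ℚ) ≤ 1 := by
      rw [mesAfford, supBudget, sum_map_filter_of_mem_ballotY hcY, hx.onY, hx.onYZ] at hc
      linarith
    have hb : (1 : ℚ) / 20 ≤ 1 / 10 - j / 20 := by linarith
    obtain rfl := hρ.unique (mesRho_of_mem_ballotY hcY (hx.onY ▸ hb) (hx.onYZ ▸ hb))
    have hpay : 1 / 10 - (j : ℚ) / 20 - min (1 / 20) (1 / 10 - (j : ℚ) / 20) =
        1 / 10 - ((j + 1 : ℕ) : ℚ) / 20 := by
      rw [min_eq_left hb]; push_cast; ring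
    exact Or.inr ⟨i, j + 1, hi, by exact_mod_cast (by linarith : (j : ℚ) + 1 ≤ 2),
      hx.pay_of_mem_ballotY hcY hpay hpay,
      by rw [Finset.insert_inter_of_notMem (notMem_of_mem_ballotY c hcY).1, hEX],
      by rw [Finset.card_insert_inter_of_mem hcY hcE, hEY], by omega⟩
  · have hj2 : j < 2 := by
      rw [mesAfford, supBudget, sum_map_filter_five, hx.onYZ, hx.onZC] at hc
      exact_mod_cast (by linarith : (j : ℚ) < 2)
    have hb : (1 : ℚ) / 20 ≤ 1 / 10 - j / 20 := by
      have : (j : ℚ) ≤ 1 := by exact_mod_cast (by omega : j ≤ 1)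
      linarith
    have hle := le_one_div_twenty_of_ballotY_available (hEY ▸ hj2) (hx.onY ▸ hb) (hx.onYZ ▸ hb)
      hmin
    have hlow := hρ.one_le_card_mul
    rw [card_filter_five] at hlow
    linarith
  · exact Or.inl (Finset.mem_insert_self _ _)

theorem mesPhase1_cons_six {x xf : Finset (Fin 7) → ℚ} {E : Finset (Fin 7)}
    {L : List (Fin 7)} (hx : HasBudgets x 0 0 0 (1 / 10) (1 / 10)) (h6E : 6 ∉ E)
    (h : mesPhase1 (profile 1) (fun b => if 6 ∈ b then x b - min (1 / 10) (x b) else x b)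
      (insert 6 E) L xf) :
    mesPhase1 (profile 1) x E (6 :: L) xf := by
  refine ⟨h6E, by rw [mesAfford, supBudget, sum_map_filter_six, hx.onZC, hx.onC]; norm_num,
    1 / 10, mesRho_of_sum_eq_one (by rw [sum_map_filter_six, hx.onZC, hx.onC]; norm_num)
      ⟨ballotC, Multiset.mem_filter.2 ⟨by simp [profile], by decide⟩, hx.onC.ge⟩, ?_, h⟩
  intro d _ hd ρ' hρ'
  rcases candidate_cases d with hdX | hdY | rfl | rfl
  · rw [mesAfford, supBudget, sum_map_filter_of_mem_ballotX hdX, hx.onX] at hd; norm_num at hd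
  · rw [mesAfford, supBudget, sum_map_filter_of_mem_ballotY hdY, hx.onY, hx.onYZ] at hd
    norm_num at hd
  · rw [mesAfford, supBudget, sum_map_filter_five, hx.onYZ, hx.onZC] at hd; norm_num at hd
  · exact hρ'.le_of_card_mul_le_one (by rw [card_filter_six]; norm_num)

theorem six_mem_of_mem_mes_profile_one : ∀ W ∈ mes (profile 1) 5, (6 : Fin 7) ∈ W := by
  rintro W ⟨L₁, xf, h₁, hW⟩
  have hsub : L₁.toFinset ⊆ W := by
    rcases hW with ⟨-, rfl⟩ | ⟨-, -, L₂, -, -, rfl⟩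
    · exact subset_rfl
    · simp [List.toFinset_append]
  by_contra h6W
  have h6 : 6 ∉ L₁.toFinset := fun h => h6W (hsub h)
  have hR : Profile1Invariant xf L₁.toFinset := by
    simpa using h₁.invariant Profile1Invariant profile1Invariant_step
      (Or.inr ⟨0, 0, by norm_num, by norm_num,
        by constructor <;> norm_num [card_profile], by simp, by simp, by simp⟩)
  obtain ⟨i, j, hi, hj, hx, -, -, hE⟩ := hR.resolve_left h6
  rcases hW with ⟨hlen, -⟩ | ⟨-, hno, -⟩
  · have := List.toFinset_card_of_nodup h₁.nodup
    omega
  · exact hno 6 h6 (by rw [mesAfford, supBudget, sum_map_filter_six, hx.onZC, hx.onC]; norm_num)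

theorem mem_mes_profile_one : ({0, 1, 3, 4, 6} : Finset (Fin 7)) ∈ mes (profile 1) 5 := by
  have h₀ : HasBudgets (fun _ => ((5 : ℕ) : ℚ) / (Multiset.card (profile 1) : ℚ))
      (1 / 10) (1 / 10) (1 / 10) (1 / 10) (1 / 10) := by
    constructor <;> norm_num [card_profile]
  have h₁ := h₀.pay_of_mem_ballotX (k := 0) (ρ := 1 / 20) (a' := 1 / 20) (by decide) (by norm_num)
  have h₂ := h₁.pay_of_mem_ballotX (k := 1) (ρ := 1 / 20) (a' := 0) (by decide) (by norm_num)
  have h₃ := h₂.pay_of_mem_ballotY (k := 3) (ρ := 1 / 20) (b' := 1 / 20) (c' := 1 / 20)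
    (by decide) (by norm_num) (by norm_num)
  have h₄ := h₃.pay_of_mem_ballotY (k := 4) (ρ := 1 / 20) (b' := 0) (c' := 0)
    (by decide) (by norm_num) (by norm_num)
  exact ⟨[0, 1, 3, 4, 6], _,
    mesPhase1_cons_of_mem_ballotX (by norm_num) h₀ (by norm_num) (by decide) (by decide) <|
    mesPhase1_cons_of_mem_ballotX (by norm_num) h₁ (by norm_num) (by decide) (by decide) <|
    mesPhase1_cons_of_mem_ballotY (by norm_num) h₂ (by norm_num) (by norm_num) (by decide)
      (by decide) <|
    mesPhase1_cons_of_mem_ballotY (by norm_num) h₃ (by norm_num) (by norm_num) (by decide)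
      (by decide) <|
    mesPhase1_cons_six h₄ (by decide) mesPhase1_nil,
    Or.inl ⟨rfl, by decide⟩⟩

section FullProfile

-- An `xᵢ` or `yᵢ` voter keeps `49/1020 = 5/51 - 1/20` after one purchase; buying `z` at `53/918`
-- exhausts the `{y₁,y₂,z}` voters and leaves the `{z,c}` voters `37/918 = 5/51 - 53/918`.
def Profile2Invariant (x : Finset (Fin 7) → ℚ) (E : Finset (Fin 7)) : Prop :=
  (∃ i j : ℕ, i ≤ 1 ∧ j ≤ 1 ∧
    HasBudgets x (5 / 51 - i / 20) (5 / 51 - j / 20) (5 / 51 - j / 20) (5 / 51) (5 / 51) ∧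
    (E ∩ ballotX).card = i ∧ (E ∩ ballotY).card = j ∧ E.card = i + j ∧ 5 ∉ E ∧ 6 ∉ E) ∨
  (HasBudgets x (49 / 1020) (49 / 1020) 0 (37 / 918) (5 / 51) ∧
    (E ∩ ballotX).card = 1 ∧ (E ∩ ballotY).card = 1 ∧ E.card = 3 ∧ 6 ∉ E)

variable {x : Finset (Fin 7) → ℚ}

theorem not_mesAfford_of_phase1_end
    (hx : HasBudgets x (49 / 1020) (49 / 1020) 0 (37 / 918) (5 / 51)) (c : Fin 7) :
    ¬ mesAfford (profile 2) x c := by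
  rw [mesAfford, supBudget, not_le]
  rcases candidate_cases c with hc | hc | rfl | rfl
  · rw [sum_map_filter_of_mem_ballotX hc, hx.onX]; norm_num
  · rw [sum_map_filter_of_mem_ballotY hc, hx.onY, hx.onYZ]; norm_num
  · rw [sum_map_filter_five, hx.onYZ, hx.onZC]; norm_num
  · rw [sum_map_filter_six, hx.onZC, hx.onC]; norm_num

theorem mesRho_five (hYZ : x ballotYZ = 49 / 1020) (hZC : x ballotZC = 5 / 51) :
    mesRho (profile 2) x 5 (53 / 918) :=
  mesRho_of_sum_eq_one (by rw [sum_map_filter_five, hYZ, hZC]; norm_num [min_def])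
    ⟨ballotZC, Multiset.mem_filter.2 ⟨by simp [profile], by decide⟩, by rw [hZC]; norm_num⟩

theorem bought_x_and_y_of_one_div_twenty_lt {E : Finset (Fin 7)} {i j : ℕ} {d e ρ : ℚ}
    (hi : i ≤ 1) (hj : j ≤ 1)
    (hx : HasBudgets x (5 / 51 - i / 20) (5 / 51 - j / 20) (5 / 51 - j / 20) d e)
    (hEX : (E ∩ ballotX).card = i) (hEY : (E ∩ ballotY).card = j)
    (hmin : ∀ d, d ∉ E → mesAfford (profile 2) x d → ∀ ρ', mesRho (profile 2) x d ρ' → ρ ≤ ρ')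
    (hρ : 1 / 20 < ρ) : i = 1 ∧ j = 1 := by
  constructor
  · by_contra hi1
    obtain rfl : i = 0 := by omega
    exact hρ.not_ge <| le_one_div_twenty_of_ballotX_available (by rw [hEX]; decide)
      (by rw [hx.onX]; norm_num) hmin
  · by_contra hj1
    obtain rfl : j = 0 := by omega
    exact hρ.not_ge <| le_one_div_twenty_of_ballotY_available (by rw [hEY]; decide)
      (by rw [hx.onY]; norm_num) (by rw [hx.onYZ]; norm_num) hmin

theorem profile2Invariant_step (x : Finset (Fin 7) → ℚ) (E : Finset (Fin 7)) (c : Fin 7) (ρ : ℚ)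
    (hR : Profile2Invariant x E) (hcE : c ∉ E) (hc : mesAfford (profile 2) x c)
    (hρ : mesRho (profile 2) x c ρ)
    (hmin : ∀ d, d ∉ E → mesAfford (profile 2) x d → ∀ ρ', mesRho (profile 2) x d ρ' → ρ ≤ ρ') :
    Profile2Invariant (fun b => if c ∈ b then x b - min ρ (x b) else x b) (insert c E) := by
  rcases hR with ⟨i, j, hi, hj, hx, hEX, hEY, hE, h5, h6⟩ | ⟨hx, -⟩
  swap
  · exact absurd hc (not_mesAfford_of_phase1_end hx c)
  have hcard : (insert c E).card = E.card + 1 := Finset.card_insert_of_notMem hcE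
  have hlow := hρ.one_le_card_mul
  rcases candidate_cases c with hcX | hcY | rfl | rfl
  · obtain rfl : i = 0 := by
      rw [mesAfford, supBudget, sum_map_filter_of_mem_ballotX hcX, hx.onX] at hc
      exact Nat.lt_one_iff.1 (by exact_mod_cast (by linarith : (i : ℚ) < 1))
    obtain rfl := hρ.unique (mesRho_of_mem_ballotX hcX (by rw [hx.onX]; norm_num))
    obtain ⟨hcY, -, -, -, hc5, hc6⟩ := notMem_of_mem_ballotX c hcX
    exact Or.inl ⟨1, j, le_rfl, hj, hx.pay_of_mem_ballotX hcX (by norm_num),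
      by rw [Finset.card_insert_inter_of_mem hcX hcE, hEX],
      by rw [Finset.insert_inter_of_notMem hcY, hEY], by omega,
      by simp [h5, Ne.symm hc5], by simp [h6, Ne.symm hc6]⟩
  · obtain rfl : j = 0 := by
      rw [mesAfford, supBudget, sum_map_filter_of_mem_ballotY hcY, hx.onY, hx.onYZ] at hc
      exact Nat.lt_one_iff.1 (by exact_mod_cast (by linarith : (j : ℚ) < 1))
    obtain rfl := hρ.unique
      (mesRho_of_mem_ballotY hcY (by rw [hx.onY]; norm_num) (by rw [hx.onYZ]; norm_num))
    obtain ⟨hcX, -, -, -, hc5, hc6⟩ := notMem_of_mem_ballotY c hcY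
    exact Or.inl ⟨i, 1, hi, le_rfl, hx.pay_of_mem_ballotY hcY (by norm_num) (by norm_num),
      by rw [Finset.insert_inter_of_notMem hcX, hEX],
      by rw [Finset.card_insert_inter_of_mem hcY hcE, hEY], by omega,
      by simp [h5, Ne.symm hc5], by simp [h6, Ne.symm hc6]⟩
  · rw [card_filter_five] at hlow
    obtain ⟨rfl, rfl⟩ := bought_x_and_y_of_one_div_twenty_lt hi hj hx hEX hEY hmin (by linarith)
    norm_num at hx
    obtain rfl := hρ.unique (mesRho_five hx.onYZ hx.onZC)
    exact Or.inr ⟨hx.pay_five (by norm_num [min_def]) (by norm_num [min_def]),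
      by rw [Finset.insert_inter_of_notMem (by decide), hEX],
      by rw [Finset.insert_inter_of_notMem (by decide), hEY], by omega, by simp [h6]⟩
  · rw [card_filter_six] at hlow
    norm_num at hlow
    obtain ⟨rfl, rfl⟩ := bought_x_and_y_of_one_div_twenty_lt hi hj hx hEX hEY hmin (by linarith)
    norm_num at hx
    have := hmin 5 h5
      (by rw [mesAfford, supBudget, sum_map_filter_five, hx.onYZ, hx.onZC]; norm_num) _
      (mesRho_five hx.onYZ hx.onZC)
    linarith

theorem buyTime_phase1_end_of_mem_ballotX
    (hx : HasBudgets x (49 / 1020) (49 / 1020) 0 (37 / 918) (5 / 51)) (hc : c ∈ ballotX) :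
    buyTime (profile 2) x c = 1 / 510 := by
  rw [buyTime_of_mem_ballotX hc, hx.onX]; norm_num

theorem lt_buyTime_phase1_end_of_notMem_ballotX
    (hx : HasBudgets x (49 / 1020) (49 / 1020) 0 (37 / 918) (5 / 51)) (hc : c ∉ ballotX) :
    1 / 510 < buyTime (profile 2) x c := by
  rcases candidate_cases c with hcX | hcY | rfl | rfl
  · exact absurd hcX hc
  · rw [buyTime_of_mem_ballotY hcY, hx.onY, hx.onYZ]; norm_num
  · rw [buyTime_five, hx.onYZ, hx.onZC]; norm_num
  · rw [buyTime_six, hx.onZC, hx.onC]; norm_num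

theorem hasBudgets_after_phase2_purchase
    (hx : HasBudgets x (49 / 1020) (49 / 1020) 0 (37 / 918) (5 / 51)) (hc : c ∈ ballotX) :
    HasBudgets (fun b => if c ∈ b then 0 else x b + buyTime (profile 2) x c)
      0 (1 / 20) (1 / 510) (97 / 2295) (1 / 10) := by
  have ht := buyTime_phase1_end_of_mem_ballotX hx hc
  exact hx.reset_of_mem_ballotX hc (by rw [ht]; norm_num) (by rw [ht]; norm_num)
    (by rw [ht]; norm_num) (by rw [ht]; norm_num)

theorem buyTime_after_phase2_purchase_of_mem_ballotY
    (hx : HasBudgets x 0 (1 / 20) (1 / 510) (97 / 2295) (1 / 10)) (hc : c ∈ ballotY) :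
    buyTime (profile 2) x c = 49 / 2040 := by
  rw [buyTime_of_mem_ballotY hc, hx.onY, hx.onYZ]; norm_num

theorem lt_buyTime_after_phase2_purchase_of_notMem_ballotY
    (hx : HasBudgets x 0 (1 / 20) (1 / 510) (97 / 2295) (1 / 10)) (hc : c ∉ ballotY) :
    49 / 2040 < buyTime (profile 2) x c := by
  rcases candidate_cases c with hcX | hcY | rfl | rfl
  · rw [buyTime_of_mem_ballotX hcX, hx.onX]; norm_num
  · exact absurd hcY hc
  · rw [buyTime_five, hx.onYZ, hx.onZC]; norm_num
  · rw [buyTime_six, hx.onZC, hx.onC]; norm_num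

theorem six_notMem_of_mesPhase2 {E : Finset (Fin 7)} {L : List (Fin 7)}
    (hx : HasBudgets x (49 / 1020) (49 / 1020) 0 (37 / 918) (5 / 51))
    (hEX : (E ∩ ballotX).card = 1) (hEY : (E ∩ ballotY).card = 1)
    (h : mesPhase2 (profile 2) x E L) (hL : L.length = 2) : 6 ∉ L := by
  match L, hL, h with
  | [d₁, d₂], _, ⟨_, _, hd₁, hd₂E, _, hd₂, _⟩ =>
  obtain ⟨e, heX, heE⟩ := Finset.exists_mem_notMem_of_card_inter_lt (E := E) (S := ballotX)
    (by rw [hEX]; decide)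
  have hd₁X : d₁ ∈ ballotX := by
    by_contra hnot
    have := hd₁ e heE (filter_profile_ne_zero e)
    rw [buyTime_phase1_end_of_mem_ballotX hx heX] at this
    linarith [lt_buyTime_phase1_end_of_notMem_ballotX hx hnot]
  have hx' := hasBudgets_after_phase2_purchase hx hd₁X
  obtain ⟨f, hfY, hfE⟩ := Finset.exists_mem_notMem_of_card_inter_lt (E := insert d₁ E)
    (S := ballotY)
    (by rw [Finset.insert_inter_of_notMem (notMem_of_mem_ballotX d₁ hd₁X).1, hEY]; decide)
  have hd₂6 : d₂ ≠ 6 := by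
    rintro rfl
    have := hd₂ f hfE (filter_profile_ne_zero f)
    rw [buyTime_after_phase2_purchase_of_mem_ballotY hx' hfY] at this
    linarith [lt_buyTime_after_phase2_purchase_of_notMem_ballotY hx' (c := 6) (by decide)]
  simp only [List.mem_cons, List.not_mem_nil, or_false, not_or]
  exact ⟨(notMem_of_mem_ballotX d₁ hd₁X).2.2.2.2.2.symm, hd₂6.symm⟩

theorem six_notMem_of_mem_mes_profile_two : ∀ W ∈ mes (profile 2) 5, (6 : Fin 7) ∉ W := by
  rintro W ⟨L₁, xf, h₁, hW⟩
  have hR : Profile2Invariant xf L₁.toFinset := by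
    simpa using h₁.invariant Profile2Invariant profile2Invariant_step
      (Or.inl ⟨0, 0, zero_le_one, zero_le_one, by constructor <;> norm_num [card_profile],
        by simp, by simp, by simp, by simp, by simp⟩)
  rcases hW with ⟨-, rfl⟩ | ⟨-, hno, L₂, h₂, hlen, rfl⟩
  · rcases hR with ⟨-, -, -, -, -, -, -, -, -, h6⟩ | ⟨-, -, -, -, h6⟩ <;> exact h6
  rcases hR with ⟨i, j, -, hj, hx, -, -, -, h5, -⟩ | ⟨hx, hEX, hEY, hE, h6⟩
  · refine absurd ?_ (hno 5 h5)
    have : (j : ℚ) ≤ 1 := by exact_mod_cast hj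
    rw [mesAfford, supBudget, sum_map_filter_five, hx.onYZ, hx.onZC]
    linarith
  · have hL₁ : L₁.length = 3 := by rw [← List.toFinset_card_of_nodup h₁.nodup, hE]
    rw [List.toFinset_append, Finset.mem_union, not_or]
    exact ⟨h6, fun h => six_notMem_of_mesPhase2 hx hEX hEY h₂ (by simp at hlen; omega)
      (List.mem_toFinset.1 h)⟩

theorem mesPhase1_cons_five {xf : Finset (Fin 7) → ℚ} {E : Finset (Fin 7)}
    {L : List (Fin 7)} (hx : HasBudgets x (49 / 1020) (49 / 1020) (49 / 1020) (5 / 51) (5 / 51))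
    (h5E : 5 ∉ E)
    (h : mesPhase1 (profile 2) (fun b => if 5 ∈ b then x b - min (53 / 918) (x b) else x b)
      (insert 5 E) L xf) :
    mesPhase1 (profile 2) x E (5 :: L) xf := by
  refine ⟨h5E, by rw [mesAfford, supBudget, sum_map_filter_five, hx.onYZ, hx.onZC]; norm_num,
    53 / 918, mesRho_five hx.onYZ hx.onZC, ?_, h⟩
  intro d _ hd ρ' hρ'
  rcases candidate_cases d with hdX | hdY | rfl | rfl
  · rw [mesAfford, supBudget, sum_map_filter_of_mem_ballotX hdX, hx.onX] at hd; norm_num at hd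
  · rw [mesAfford, supBudget, sum_map_filter_of_mem_ballotY hdY, hx.onY, hx.onYZ] at hd
    norm_num at hd
  · exact (hρ'.unique (mesRho_five hx.onYZ hx.onZC)).ge
  · exact hρ'.le_of_card_mul_le_one (by rw [card_filter_six]; norm_num)

theorem mesPhase2_of_phase1_end {E : Finset (Fin 7)} {d₁ d₂ : Fin 7}
    (hx : HasBudgets x (49 / 1020) (49 / 1020) 0 (37 / 918) (5 / 51))
    (hd₁ : d₁ ∈ ballotX) (hd₁E : d₁ ∉ E) (hd₂ : d₂ ∈ ballotY) (hd₂E : d₂ ∉ insert d₁ E) :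
    mesPhase2 (profile 2) x E [d₁, d₂] := by
  have hx' := hasBudgets_after_phase2_purchase hx hd₁
  refine ⟨hd₁E, filter_profile_ne_zero d₁, fun d _ _ => ?_, hd₂E, filter_profile_ne_zero d₂,
    fun d _ _ => ?_, trivial⟩
  · rw [buyTime_phase1_end_of_mem_ballotX hx hd₁]
    by_cases hd : d ∈ ballotX
    · rw [buyTime_phase1_end_of_mem_ballotX hx hd]
    · exact (lt_buyTime_phase1_end_of_notMem_ballotX hx hd).le
  · rw [buyTime_after_phase2_purchase_of_mem_ballotY hx' hd₂]
    by_cases hd : d ∈ ballotY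
    · rw [buyTime_after_phase2_purchase_of_mem_ballotY hx' hd]
    · exact (lt_buyTime_after_phase2_purchase_of_notMem_ballotY hx' hd).le

theorem mem_mes_profile_two : ({0, 1, 3, 4, 5} : Finset (Fin 7)) ∈ mes (profile 2) 5 := by
  have h₀ : HasBudgets (fun _ => ((5 : ℕ) : ℚ) / (Multiset.card (profile 2) : ℚ))
      (5 / 51) (5 / 51) (5 / 51) (5 / 51) (5 / 51) := by
    constructor <;> norm_num [card_profile]
  have h₁ := h₀.pay_of_mem_ballotX (k := 0) (ρ := 1 / 20) (a' := 49 / 1020) (by decide)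
    (by norm_num)
  have h₂ := h₁.pay_of_mem_ballotY (k := 3) (ρ := 1 / 20) (b' := 49 / 1020) (c' := 49 / 1020)
    (by decide) (by norm_num) (by norm_num)
  have h₃ := h₂.pay_five (ρ := 53 / 918) (c' := 0) (d' := 37 / 918) (by norm_num [min_def])
    (by norm_num [min_def])
  exact ⟨[0, 3, 5], _,
    mesPhase1_cons_of_mem_ballotX (by norm_num) h₀ (by norm_num) (by decide) (by decide) <|
    mesPhase1_cons_of_mem_ballotY (by norm_num) h₁ (by norm_num) (by norm_num) (by decide)
      (by decide) <|
    mesPhase1_cons_five h₂ (by decide) mesPhase1_nil,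
    Or.inr ⟨by norm_num, fun c _ => not_mesAfford_of_phase1_end h₃ c, [1, 4],
      mesPhase2_of_phase1_end h₃ (by decide) (by decide) (by decide) (by decide), rfl,
      by decide⟩⟩

end FullProfile

end MESExample

open MESExample in
/-- The method of equal shares violates participation for unrepresented voters:
for `k = 5` and the profile `20×{x₁,x₂,x₃}, 10×{y₁,y₂}, 10×{y₁,y₂,z}, 9×{z,c}, 2×{c}`,
with `i` one of the two voters approving only `c` (candidate `6`), every winning
committee for `A` avoids all of `i`'s approved candidates (`c` is in no winning
committee for `A`), yet `c` is in every winning committee for `A₋ᵢ` and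
`f(A₋ᵢ,k) ≻ᵢ f(A,k)`. -/
theorem mes_fails_participation_unrepresented :
    validProfile counterProfile ∧ ({6} : Finset (Fin 7)) ∈ counterProfile ∧
    (∀ W ∈ mes counterProfile 5, W ∩ ({6} : Finset (Fin 7)) = ∅) ∧
    (∀ W ∈ mes (counterProfile.erase ({6} : Finset (Fin 7))) 5, (6 : Fin 7) ∈ W) ∧
    KellyStrict ({6} : Finset (Fin 7))
      (mes (counterProfile.erase ({6} : Finset (Fin 7))) 5)
      (mes counterProfile 5) := by
  rw [counterProfile_erase, counterProfile_eq]
  have hA : ∀ W ∈ mes (profile 2) 5, W ∩ ({6} : Finset (Fin 7)) = ∅ := fun W hW =>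
    Finset.inter_singleton_of_notMem (six_notMem_of_mem_mes_profile_two W hW)
  refine ⟨validProfile_profile 2, by decide, hA, six_mem_of_mem_mes_profile_one,
    fun W _ W' hW' => by simp [hA W' hW'], _, mem_mes_profile_one, _, mem_mes_profile_two, ?_⟩
  rw [hA _ mem_mes_profile_two]
  decide
end
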